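/- arXiv:0902.4569 — 6 statements merged into one kernel-verified Lean document; each statement's English description precedes it below -/
import Mathlib

section
/- Let K ≥ 1 be an integer and ℛ ⊆ ℝ₊^K a nonempty compact convex coordinate-convex rate region. Then there exists a quasi-continuous function H : ℝ₊^K → ℝ₊^K such that for every w ∈ ℝ₊^K one has H(w) ∈ ℛ and ⟨H(w), w⟩ ≥ ⟨r, w⟩ for all r ∈ ℛ (i.e., H is a quasi-continuous selection of the max-weight correspondence w ↦ argmax_{r∈ℛ} ⟨r,w⟩). -/
open Filter Topology MeasureTheory
open scoped ENNReal NNReal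

/-- The nonnegative orthant ℝ₊^K as a metric subspace of `Fin K → ℝ`
(the latter carrying the square/sup product metric, as in the paper). -/
abbrev Orth (K : ℕ) := {w : Fin K → ℝ // ∀ k, 0 ≤ w k}

instance (K : ℕ) : Nonempty (Orth K) := ⟨⟨fun _ => 0, fun _ => le_rfl⟩⟩

/-- Euclidean inner product on `Fin K → ℝ`. -/
def ip {K : ℕ} (x y : Fin K → ℝ) : ℝ := ∑ k, x k * y k

/-- `F` is quasi-continuous at `x`: there is a sequence `xₙ → x` with `F xₙ → F x`
and `F` continuous at every `xₙ`. -/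
def QuasiContinuousAt {X Y : Type*} [MetricSpace X] [MetricSpace Y] (F : X → Y) (x : X) : Prop :=
  ∃ u : ℕ → X, Tendsto u atTop (nhds x) ∧
    Tendsto (fun n => F (u n)) atTop (nhds (F x)) ∧ ∀ n, ContinuousAt F (u n)

/-- `F` is quasi-continuous if it is quasi-continuous at every point. -/
def QuasiContinuous {X Y : Type*} [MetricSpace X] [MetricSpace Y] (F : X → Y) : Prop :=
  ∀ x, QuasiContinuousAt F x

/-!
The support function `w ↦ max_{r ∈ R} ⟨r, w⟩` is Lipschitz, so by Rademacher's theorem it is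
differentiable on a dense set, and wherever it is differentiable its gradient is the unique
maximiser. The max-weight correspondence has closed graph and values in the compact set `R`, so
every selection of it is continuous where it is single-valued. Choosing at each `w` a limit of the
unique maximisers along such points converging to `w` gives a quasi-continuous selection.
-/

open Set

section Selection

variable {X Y : Type*}

theorem continuousAt_of_isClosed_graph_of_subsingleton [TopologicalSpace X] [TopologicalSpace Y]
    {Φ : X → Set Y} {S : Set Y} (hS : IsCompact S) (hΦS : ∀ x, Φ x ⊆ S)
    (hΦ : IsClosed {p : X × Y | p.2 ∈ Φ p.1}) {H : X → Y} (hH : ∀ x, H x ∈ Φ x) {x : X}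
    (hx : (Φ x).Subsingleton) : ContinuousAt H x := by
  refine hS.tendsto_nhds_of_unique_mapClusterPt (.of_forall fun z => hΦS z (hH z))
    fun y _ hy => hx ?_ (hH x)
  have hgraph : MapClusterPt (x, y) (𝓝 x) fun z => (z, H z) := by
    rw [((𝓝 x).basis_sets.prod_nhds (𝓝 y).basis_sets).mapClusterPt_iff_frequently]
    rintro ⟨s, t⟩ ⟨hs, ht⟩
    exact ((mapClusterPt_iff_frequently.1 hy t ht).and_eventually hs).mono fun z hz => hz.symm
  exact hΦ.mem_of_mapClusterPt hgraph (.of_forall hH)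

theorem exists_quasiContinuous_selection [MetricSpace X] [MetricSpace Y]
    {Φ : X → Set Y} {S : Set Y} (hS : IsCompact S) (hΦS : ∀ x, Φ x ⊆ S)
    (hΦ : IsClosed {p : X × Y | p.2 ∈ Φ p.1}) (hne : ∀ x, (Φ x).Nonempty)
    (hD : Dense {x | (Φ x).Subsingleton}) :
    ∃ H : X → Y, QuasiContinuous H ∧ ∀ x, H x ∈ Φ x := by
  choose s hs using hne
  have hlim : ∀ x, ∃ y ∈ Φ x, ∃ u : ℕ → X, (∀ n, (Φ (u n)).Subsingleton) ∧
      Tendsto u atTop (𝓝 x) ∧ Tendsto (s ∘ u) atTop (𝓝 y) := by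
    intro x
    obtain ⟨v, hvD, hvx⟩ := mem_closure_iff_seq_limit.1 (hD x)
    obtain ⟨y, -, φ, hφ, hy⟩ := hS.tendsto_subseq fun n => hΦS _ (hs (v n))
    have hux := hvx.comp hφ.tendsto_atTop
    exact ⟨y, hΦ.mem_of_tendsto (hux.prodMk_nhds hy) (.of_forall fun n => hs _), v ∘ φ,
      fun n => hvD _, hux, hy⟩
  choose H hH u hu hux huy using hlim
  refine ⟨H, fun x => ⟨u x, hux x, ?_, fun n =>
    continuousAt_of_isClosed_graph_of_subsingleton hS hΦS hΦ hH (hu x n)⟩, hH⟩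
  exact (huy x).congr fun n => hu x n (hs _) (hH _)

end Selection

theorem Dense.preimage_subtypeVal {α : Type*} [TopologicalSpace α] {s D : Set α} (hD : Dense D)
    (hs : s ⊆ closure (interior s)) : Dense (Subtype.val ⁻¹' D : Set s) := by
  rw [Subtype.dense_iff, Subtype.image_preimage_coe]
  refine hs.trans (closure_minimal ?_ isClosed_closure)
  exact (hD.open_subset_closure_inter isOpen_interior).trans
    (closure_mono (inter_subset_inter_left _ interior_subset))

theorem fderiv_eq_of_forall_le_of_eq {E : Type*} [NormedAddCommGroup E] [NormedSpace ℝ E]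
    {f : E → ℝ} {L : E →L[ℝ] ℝ} {x : E} (hle : ∀ y, L y ≤ f y) (heq : L x = f x)
    (hf : DifferentiableAt ℝ f x) : fderiv ℝ f x = L := by
  have hmin : IsLocalMin (f - ⇑L) x :=
    IsMinOn.isLocalMin (fun y _ => by simpa [heq] using hle y) univ_mem
  have hzero := hmin.fderiv_eq_zero
  rwa [fderiv_sub hf L.differentiableAt, L.fderiv, sub_eq_zero] at hzero

section MaxWeight

variable {K : ℕ}

theorem ip_eq_dotProduct (x y : Fin K → ℝ) : ip x y = x ⬝ᵥ y := rfl

variable (K) in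
noncomputable def ipCLM : (Fin K → ℝ) →L[ℝ] (Fin K → ℝ) →L[ℝ] ℝ :=
  LinearMap.toContinuousLinearMap
    (LinearMap.toContinuousLinearMap.toLinearMap ∘ₗ dotProductBilin ℝ ℝ)

theorem ipCLM_apply (r w : Fin K → ℝ) : ipCLM K r w = ip r w := rfl

theorem ipCLM_injective : Function.Injective (ipCLM K) := fun r s hrs => funext fun k => by
  simpa only [ipCLM_apply, ip_eq_dotProduct, dotProduct_single, mul_one] using congr($hrs (Pi.single k 1))

def maxWeightSet (R : Set (Fin K → ℝ)) (w : Fin K → ℝ) : Set (Fin K → ℝ) :=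
  {r ∈ R | ∀ s ∈ R, ip s w ≤ ip r w}

noncomputable def supportFun (R : Set (Fin K → ℝ)) (w : Fin K → ℝ) : ℝ :=
  sSup ((ip · w) '' R)

variable {R : Set (Fin K → ℝ)} {r s w : Fin K → ℝ}

theorem maxWeightSet_nonempty (hR : IsCompact R) (hne : R.Nonempty) (w : Fin K → ℝ) :
    (maxWeightSet R w).Nonempty :=
  let ⟨r, hr, hmax⟩ := hR.exists_isMaxOn hne ((ipCLM K).flip w).continuous.continuousOn
  ⟨r, hr, hmax⟩

theorem isClosed_maxWeightSet_graph (hR : IsClosed R) :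
    IsClosed {p : (Fin K → ℝ) × (Fin K → ℝ) | p.2 ∈ maxWeightSet R p.1} := by
  have hip : Continuous fun p : (Fin K → ℝ) × (Fin K → ℝ) => ip p.2 p.1 :=
    (ipCLM K).continuous₂.comp continuous_swap
  have hgraph : {p : (Fin K → ℝ) × (Fin K → ℝ) | p.2 ∈ maxWeightSet R p.1} =
      Prod.snd ⁻¹' R ∩ ⋂ s ∈ R, {p | ip s p.1 ≤ ip p.2 p.1} := by
    ext; simp [maxWeightSet]
  rw [hgraph]
  exact (hR.preimage continuous_snd).inter <| isClosed_biInter fun s _ =>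
    isClosed_le ((ipCLM K s).continuous.comp continuous_fst) hip

theorem supportFun_eq (hr : r ∈ maxWeightSet R w) : supportFun R w = ip r w :=
  IsGreatest.csSup_eq ⟨mem_image_of_mem _ hr.1, forall_mem_image.2 hr.2⟩

theorem ip_le_supportFun (hR : IsCompact R) (hs : s ∈ R) (w : Fin K → ℝ) :
    ip s w ≤ supportFun R w := by
  obtain ⟨r, hr⟩ := maxWeightSet_nonempty hR ⟨s, hs⟩ w
  exact supportFun_eq hr ▸ hr.2 s hs

theorem lipschitzWith_supportFun (hR : IsCompact R) : ∃ C, LipschitzWith C (supportFun R) := by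
  obtain ⟨M, hM0, hM⟩ := hR.isBounded.exists_pos_norm_le
  refine ⟨_, LipschitzWith.of_le_add_mul' (‖ipCLM K‖ * M) fun x y => ?_⟩
  rcases R.eq_empty_or_nonempty with rfl | hne
  · simp only [supportFun, image_empty, Real.sSup_empty]
    positivity
  obtain ⟨r, hr⟩ := maxWeightSet_nonempty hR hne x
  have hbound : ip r (x - y) ≤ ‖ipCLM K‖ * M * dist x y := calc
    ip r (x - y) ≤ ‖ipCLM K r (x - y)‖ := Real.le_norm_self _
    _ ≤ ‖ipCLM K‖ * ‖r‖ * ‖x - y‖ := (ipCLM K).le_opNorm₂ r (x - y)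
    _ ≤ ‖ipCLM K‖ * M * dist x y := by
      rw [dist_eq_norm]; gcongr; exact hM r hr.1
  have hsub : ip r (x - y) = ip r x - ip r y := map_sub (ipCLM K r) x y
  linarith [supportFun_eq hr, ip_le_supportFun hR hr.1 y]

theorem maxWeightSet_subsingleton (hR : IsCompact R)
    (hd : DifferentiableAt ℝ (supportFun R) w) : (maxWeightSet R w).Subsingleton := by
  have hderiv : ∀ r ∈ maxWeightSet R w, fderiv ℝ (supportFun R) w = ipCLM K r := fun r hr =>
    fderiv_eq_of_forall_le_of_eq (fun v => ip_le_supportFun hR hr.1 v) (supportFun_eq hr).symm hd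
  exact fun r hr s hs => ipCLM_injective ((hderiv r hr).symm.trans (hderiv s hs))

theorem dense_setOf_maxWeightSet_subsingleton (hR : IsCompact R) :
    Dense {w | (maxWeightSet R w).Subsingleton} := by
  obtain ⟨C, hC⟩ := lipschitzWith_supportFun hR
  exact (Measure.dense_of_ae (hC.ae_differentiableAt (μ := volume))).mono
    fun w hw => maxWeightSet_subsingleton hR hw

end MaxWeight

theorem isClosed_orthant (K : ℕ) : IsClosed {w : Fin K → ℝ | ∀ k, 0 ≤ w k} :=
  isClosed_Ici (a := 0)

theorem orthant_subset_closure_interior (K : ℕ) :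
    {w : Fin K → ℝ | ∀ k, 0 ≤ w k} ⊆ closure (interior {w | ∀ k, 0 ≤ w k}) := by
  have hpi : {w : Fin K → ℝ | ∀ k, 0 ≤ w k} = univ.pi fun _ => Ici 0 := by
    ext; simp only [mem_ofPred_eq, mem_univ_pi, mem_Ici]
  rw [hpi, interior_pi_set finite_univ, closure_pi_set]
  simp

theorem maxweight_quasicontinuous_selection_general
    (K : ℕ) (R : Set (Fin K → ℝ))
    (hRne : R.Nonempty) (hRcomp : IsCompact R)
    (hRpos : ∀ r ∈ R, ∀ k, 0 ≤ r k) :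
    ∃ H : Orth K → Orth K, QuasiContinuous H ∧
      ∀ w : Orth K, (H w).1 ∈ R ∧ ∀ r ∈ R, ip r w.1 ≤ ip (H w).1 w.1 := by
  let Φ : Orth K → Set (Orth K) := fun x => Subtype.val ⁻¹' maxWeightSet R x.1
  have hS : IsCompact (Subtype.val ⁻¹' R : Set (Orth K)) :=
    (isClosed_orthant K).isClosedEmbedding_subtypeVal.isCompact_preimage hRcomp
  have hΦ : IsClosed {p : Orth K × Orth K | p.2 ∈ Φ p.1} :=
    (isClosed_maxWeightSet_graph hRcomp.isClosed).preimage
      (continuous_subtype_val.prodMap continuous_subtype_val)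
  have hne : ∀ x, (Φ x).Nonempty := fun x =>
    let ⟨r, hr⟩ := maxWeightSet_nonempty hRcomp hRne x.1
    ⟨⟨r, hRpos r hr.1⟩, hr⟩
  have hD : Dense {x | (Φ x).Subsingleton} :=
    ((dense_setOf_maxWeightSet_subsingleton hRcomp).preimage_subtypeVal
      (orthant_subset_closure_interior K)).mono fun x hx => hx.preimage Subtype.val_injective
  exact exists_quasiContinuous_selection hS (fun x r hr => hr.1) hΦ hne hD

/-- There is a quasi-continuous selection of the max-weight
correspondence `w ↦ argmax_{r ∈ ℛ} ⟨r, w⟩` on the nonnegative orthant. -/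
theorem maxweight_quasicontinuous_selection
    (K : ℕ) (hK : 1 ≤ K) (R : Set (Fin K → ℝ))
    (hRne : R.Nonempty) (hRcomp : IsCompact R) (hRconv : Convex ℝ R)
    (hRpos : ∀ r ∈ R, ∀ k, 0 ≤ r k)
    (hRcc : ∀ r ∈ R, ∀ r' : Fin K → ℝ, (∀ k, 0 ≤ r' k) → (∀ k, r' k ≤ r k) → r' ∈ R) :
    ∃ H : Orth K → Orth K, QuasiContinuous H ∧
      ∀ w : Orth K, (H w).1 ∈ R ∧ ∀ r ∈ R, ip r w.1 ≤ ip (H w).1 w.1 :=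
  maxweight_quasicontinuous_selection_general K R hRne hRcomp hRpos
end

section
/- Let K ≥ 1 be an integer and ℛ ⊆ ℝ₊^K a nonempty compact convex coordinate-convex rate region with C^k := max{r^k : r ∈ ℛ}. Then there exists a quasi-continuous function H^wc : ℝ₊^K → ℝ₊^K such that H^wc(w) equals the metric projection of w onto ℛ (well defined since ℛ is nonempty, closed and convex) whenever w ∈ Π_{k=1}^K [0, C^k), and H^wc(w) ∈ argmax_{r∈ℛ} ⟨r, w⟩ for every other w ∈ ℝ₊^K. -/
/-!
On the open box `Π_k [0, C^k)` the metric projection onto the convex set `ℛ` is the unique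
minimizer of a jointly continuous objective, hence continuous (a compact-valued argmin with a
unique element varies continuously). Off the box, the support function `σ(w) = max_{r ∈ ℛ} ⟨r, w⟩`
is Lipschitz, so by Rademacher's theorem it is differentiable on a dense set, and at such a `w`
every maximizer of `⟨·, w⟩` equals `∇σ(w)`. Hence every weight with some coordinate `≥ C^k` is
a limit of weights `wₙ` with a coordinate `> C^k` (an open set, where the scheduler is max-weight)
and a unique max-weight point `tₙ`; the scheduler is continuous at `wₙ`, and we let its value at
the limit be a limit point of `(tₙ)`, which is again max-weight by closedness of the argmax graph.
-/

open Filter Topology MeasureTheory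
open scoped ENNReal NNReal

open Set Function Bornology

theorem QuasiContinuous.subtype_mk {X Y : Type*} [MetricSpace X] [MetricSpace Y] {F : X → Y}
    (hF : QuasiContinuous F) {p : Y → Prop} (hp : ∀ x, p (F x)) :
    QuasiContinuous fun x => (⟨F x, hp x⟩ : {y // p y}) := by
  intro x
  obtain ⟨u, hu, hFu, hcont⟩ := hF x
  exact ⟨u, hu, tendsto_subtype_rng.2 hFu, fun n => (hcont n).codRestrict hp⟩

section OpenSets

variable {X ι α : Type*} [TopologicalSpace X] [LinearOrder α] [TopologicalSpace α]
  [OrderClosedTopology α] {f g : X → ι → α}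

theorem isOpen_setOf_forall_lt [Finite ι] (hf : Continuous f) (hg : Continuous g) :
    IsOpen {x | ∀ i, f x i < g x i} := by
  simp only [ofPred_forall]
  exact isOpen_iInter_of_finite fun i => isOpen_lt (continuous_apply i |>.comp hf)
    (continuous_apply i |>.comp hg)

theorem isOpen_setOf_exists_lt (hf : Continuous f) (hg : Continuous g) :
    IsOpen {x | ∃ i, f x i < g x i} := by
  simp only [ofPred_exists]
  exact isOpen_iUnion fun i => isOpen_lt (continuous_apply i |>.comp hf)
    (continuous_apply i |>.comp hg)

end OpenSets

section Argmax

variable {X Y β : Type*} [TopologicalSpace X] [TopologicalSpace Y] [LinearOrder β]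
  [TopologicalSpace β] [OrderClosedTopology β] {Φ : X → Y → β} {R : Set Y}

theorem isClosed_setOf_isMaxOn (hΦ : Continuous (uncurry Φ)) (hR : IsClosed R) :
    IsClosed {q : X × Y | q.2 ∈ R ∧ IsMaxOn (Φ q.1) R q.2} := by
  have : {q : X × Y | q.2 ∈ R ∧ IsMaxOn (Φ q.1) R q.2} =
      Prod.snd ⁻¹' R ∩ ⋂ r ∈ R, {q | Φ q.1 r ≤ Φ q.1 q.2} := by
    ext q
    simp [isMaxOn_iff]
  rw [this]
  exact (hR.preimage continuous_snd).inter <| isClosed_biInter fun r _ =>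
    isClosed_le (hΦ.comp (continuous_fst.prodMk continuous_const)) hΦ

/-- A form of Berge's maximum theorem. -/
theorem continuousAt_of_eventually_isMaxOn [T2Space Y] (hΦ : Continuous (uncurry Φ))
    (hR : IsCompact R) {G : X → Y} {x₀ : X}
    (hG : ∀ᶠ x in 𝓝 x₀, G x ∈ R ∧ IsMaxOn (Φ x) R (G x))
    (huniq : ∀ y ∈ R, IsMaxOn (Φ x₀) R y → y = G x₀) : ContinuousAt G x₀ := by
  refine hR.tendsto_nhds_of_unique_mapClusterPt (hG.mono fun _ h => h.1) fun y hy hy₀ => ?_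
  have hgraph : MapClusterPt (x₀, y) (𝓝 x₀) fun x => (x, G x) := by
    rw [((𝓝 x₀).basis_sets.prod_nhds (𝓝 y).basis_sets).mapClusterPt_iff_frequently]
    rintro ⟨s, t⟩ ⟨hs, ht⟩
    exact ((mapClusterPt_iff_frequently.1 hy₀ t ht).and_eventually hs).mono fun _ h => ⟨h.2, h.1⟩
  exact huniq y hy ((isClosed_setOf_isMaxOn hΦ hR.isClosed).mem_of_mapClusterPt hgraph hG).2

theorem continuousAt_of_eventually_isMinOn [T2Space Y] (hΦ : Continuous (uncurry Φ))
    (hR : IsCompact R) {G : X → Y} {x₀ : X}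
    (hG : ∀ᶠ x in 𝓝 x₀, G x ∈ R ∧ IsMinOn (Φ x) R (G x))
    (huniq : ∀ y ∈ R, IsMinOn (Φ x₀) R y → y = G x₀) : ContinuousAt G x₀ :=
  continuousAt_of_eventually_isMaxOn (β := βᵒᵈ) hΦ hR hG huniq

theorem exists_isMaxOn_tendsto_of_tendsto [FirstCountableTopology Y] [T2Space Y]
    (hΦ : Continuous (uncurry Φ))
    (hR : IsCompact R) (hRne : R.Nonempty) {u : ℕ → X} {x : X} (hu : Tendsto u atTop (𝓝 x)) :
    ∃ s ∈ R, IsMaxOn (Φ x) R s ∧ ∃ φ : ℕ → ℕ, StrictMono φ ∧ ∃ t : ℕ → Y,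
      (∀ n, t n ∈ R ∧ IsMaxOn (Φ (u (φ n))) R (t n)) ∧ Tendsto t atTop (𝓝 s) := by
  have hmax : ∀ n, ∃ t ∈ R, IsMaxOn (Φ (u n)) R t := fun n =>
    hR.exists_isMaxOn hRne (hΦ.comp (continuous_const.prodMk continuous_id)).continuousOn
  choose t htR htmax using hmax
  obtain ⟨s, hs, φ, hφ, hts⟩ := hR.tendsto_subseq htR
  have hlim : Tendsto (fun n => (u (φ n), t (φ n))) atTop (𝓝 (x, s)) :=
    (hu.comp hφ.tendsto_atTop).prodMk_nhds hts
  refine ⟨s, hs, ?_, φ, hφ, t ∘ φ, fun n => ⟨htR _, htmax _⟩, hts⟩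
  exact ((isClosed_setOf_isMaxOn hΦ hR.isClosed).mem_of_tendsto hlim
    (Eventually.of_forall fun n => ⟨htR _, htmax _⟩)).2

end Argmax

section Selection

variable {X Y : Type*} [MetricSpace X] [MetricSpace Y] {R : Set Y} {f g : X → Y → ℝ}
  {B U : Set X}

theorem exists_quasiContinuous_selection_s1 (hR : IsCompact R) (hRne : R.Nonempty)
    (hf : Continuous (uncurry f)) (hg : Continuous (uncurry g)) (hB : IsOpen B) (hU : IsOpen U)
    (hBU : Disjoint B U) (hg_uniq : ∀ x ∈ B, {y ∈ R | IsMinOn (g x) R y}.Subsingleton)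
    (hU_dense : Bᶜ ⊆ closure (U ∩ {x | {y ∈ R | IsMaxOn (f x) R y}.Subsingleton})) :
    ∃ H : X → Y, QuasiContinuous H ∧ ∀ x, H x ∈ R ∧
      (x ∈ B → IsMinOn (g x) R (H x)) ∧ (x ∉ B → IsMaxOn (f x) R (H x)) := by
  set D := U ∩ {x | {y ∈ R | IsMaxOn (f x) R y}.Subsingleton}
  have hval : ∀ x, ∃ y ∈ R, (x ∈ B → IsMinOn (g x) R y) ∧ (x ∉ B → IsMaxOn (f x) R y ∧
      ∃ v : ℕ → X, (∀ n, v n ∈ D) ∧ Tendsto v atTop (𝓝 x) ∧ ∃ t : ℕ → Y,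
        (∀ n, t n ∈ R ∧ IsMaxOn (f (v n)) R (t n)) ∧ Tendsto t atTop (𝓝 y)) := by
    intro x
    by_cases hx : x ∈ B
    · obtain ⟨y, hy, hmin⟩ :=
        hR.exists_isMinOn hRne (hg.comp (continuous_const.prodMk continuous_id)).continuousOn
      exact ⟨y, hy, fun _ => hmin, fun h => absurd hx h⟩
    · obtain ⟨v, hvD, hv⟩ := mem_closure_iff_seq_limit.1 (hU_dense hx)
      obtain ⟨y, hy, hmax, φ, hφ, t, ht, hty⟩ := exists_isMaxOn_tendsto_of_tendsto hf hR hRne hv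
      exact ⟨y, hy, fun h => absurd h hx, fun _ =>
        ⟨hmax, v ∘ φ, fun n => hvD _, hv.comp hφ.tendsto_atTop, t, ht, hty⟩⟩
  choose H hHR hHB hHU using hval
  have hHmaxU : ∀ x ∈ U, IsMaxOn (f x) R (H x) := fun x hx =>
    (hHU x (hBU.notMem_of_mem_right hx)).1
  have hcontD : ∀ x ∈ D, ContinuousAt H x := fun x hx =>
    continuousAt_of_eventually_isMaxOn hf hR
      (eventually_of_mem (hU.mem_nhds hx.1) fun x' hx' => ⟨hHR x', hHmaxU x' hx'⟩)
      fun y hy hmax => hx.2 ⟨hy, hmax⟩ ⟨hHR x, hHmaxU x hx.1⟩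
  have hcontB : ∀ x ∈ B, ContinuousAt H x := fun x hx =>
    continuousAt_of_eventually_isMinOn hg hR
      (eventually_of_mem (hB.mem_nhds hx) fun x' hx' => ⟨hHR x', hHB x' hx'⟩)
      fun y hy hmin => hg_uniq x hx ⟨hy, hmin⟩ ⟨hHR x, hHB x hx⟩
  refine ⟨H, fun x => ?_, fun x => ⟨hHR x, hHB x, fun hx => (hHU x hx).1⟩⟩
  by_cases hx : x ∈ B
  · exact ⟨fun _ => x, tendsto_const_nhds, tendsto_const_nhds, fun _ => hcontB x hx⟩
  · obtain ⟨-, v, hvD, hv, t, ht, htH⟩ := hHU x hx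
    have hHv : ∀ n, H (v n) = t n := fun n =>
      (hvD n).2 ⟨hHR _, hHmaxU _ (hvD n).1⟩ (ht n)
    exact ⟨v, hv, by simpa only [hHv] using htH, fun n => hcontD _ (hvD n)⟩

end Selection

section SupportFunction

variable {E : Type*} [NormedAddCommGroup E] [NormedSpace ℝ E] {S : Set (StrongDual ℝ E)}

noncomputable def supportFunction (S : Set (StrongDual ℝ E)) (v : E) : ℝ :=
  sSup ((fun ℓ => ℓ v) '' S)

theorem le_supportFunction (hS : IsBounded S) {ℓ : StrongDual ℝ E} (hℓ : ℓ ∈ S) (v : E) :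
    ℓ v ≤ supportFunction S v := by
  obtain ⟨C, hC⟩ := hS.exists_norm_le
  refine le_csSup ⟨C * ‖v‖, ?_⟩ ⟨ℓ, hℓ, rfl⟩
  rintro _ ⟨ℓ', hℓ', rfl⟩
  calc ℓ' v ≤ ‖ℓ' v‖ := Real.le_norm_self _
    _ ≤ ‖ℓ'‖ * ‖v‖ := ℓ'.le_opNorm v
    _ ≤ C * ‖v‖ := by gcongr; exact hC ℓ' hℓ'

theorem supportFunction_le (hS : S.Nonempty) {v : E} {a : ℝ} (h : ∀ ℓ ∈ S, ℓ v ≤ a) :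
    supportFunction S v ≤ a :=
  csSup_le (hS.image _) (forall_mem_image.2 h)

theorem lipschitzWith_supportFunction (hS : S.Nonempty) {M : ℝ≥0} (hM : ∀ ℓ ∈ S, ‖ℓ‖ ≤ M) :
    LipschitzWith M (supportFunction S) := by
  have hSb : IsBounded S := isBounded_iff_forall_norm_le.2 ⟨M, hM⟩
  refine LipschitzWith.of_le_add_mul M fun x y => supportFunction_le hS fun ℓ hℓ => ?_
  calc ℓ x = ℓ y + ℓ (x - y) := by rw [map_sub]; ring
    _ ≤ supportFunction S y + ‖ℓ‖ * ‖x - y‖ :=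
      add_le_add (le_supportFunction hSb hℓ y) ((Real.le_norm_self _).trans (ℓ.le_opNorm _))
    _ ≤ supportFunction S y + M * dist x y := by
      rw [dist_eq_norm]; gcongr; exact hM ℓ hℓ

/-- Such an `ℓ` is a subgradient of the support function at `v`. -/
theorem eq_of_isMaxOn_of_hasFDerivAt_supportFunction (hS : IsBounded S) {ℓ : StrongDual ℝ E}
    (hℓ : ℓ ∈ S) {v : E} (hmax : IsMaxOn (fun ℓ' : StrongDual ℝ E => ℓ' v) S ℓ)
    {σ' : StrongDual ℝ E} (hσ : HasFDerivAt (supportFunction S) σ' v) : ℓ = σ' := by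
  have hσv : supportFunction S v = ℓ v :=
    le_antisymm (supportFunction_le ⟨ℓ, hℓ⟩ fun _ h => hmax h) (le_supportFunction hS hℓ v)
  have hmin : IsLocalMin (fun x => supportFunction S x - ℓ x) v :=
    Eventually.of_forall fun x => by
      simpa only [hσv, sub_self, sub_nonneg] using le_supportFunction hS hℓ x
  exact (sub_eq_zero.1 (hmin.hasFDerivAt_eq_zero (hσ.sub ℓ.hasFDerivAt))).symm

theorem LipschitzWith.dense_setOf_differentiableAt [FiniteDimensional ℝ E] {F : Type*}
    [NormedAddCommGroup F] [NormedSpace ℝ F] [FiniteDimensional ℝ F] {C : ℝ≥0} {f : E → F}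
    (hf : LipschitzWith C f) : Dense {x | DifferentiableAt ℝ f x} := by
  borelize E
  exact Measure.dense_of_ae (μ := Measure.addHaar) hf.ae_differentiableAt

theorem dense_setOf_subsingleton_isMaxOn [FiniteDimensional ℝ E] (hS : S.Nonempty)
    (hSb : IsBounded S) :
    Dense {v : E | {ℓ ∈ S | IsMaxOn (fun ℓ' : StrongDual ℝ E => ℓ' v) S ℓ}.Subsingleton} := by
  obtain ⟨C, hC⟩ := hSb.exists_norm_le
  have hlip := lipschitzWith_supportFunction hS (M := C.toNNReal) fun ℓ hℓ =>
    (hC ℓ hℓ).trans (Real.le_coe_toNNReal C)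
  refine hlip.dense_setOf_differentiableAt.mono fun v hv ℓ hℓ ℓ' hℓ' => ?_
  exact (eq_of_isMaxOn_of_hasFDerivAt_supportFunction hSb hℓ.1 hℓ.2 hv.hasFDerivAt).trans
    (eq_of_isMaxOn_of_hasFDerivAt_supportFunction hSb hℓ'.1 hℓ'.2 hv.hasFDerivAt).symm

end SupportFunction

section Coordinates

noncomputable def dotProductDual (ι : Type*) [Fintype ι] [DecidableEq ι] :
    (ι → ℝ) ≃L[ℝ] StrongDual ℝ (ι → ℝ) :=
  ((dotProductEquiv ℝ ι).trans LinearMap.toContinuousLinearMap).toContinuousLinearEquiv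

variable {ι : Type*} [Fintype ι]

theorem dense_setOf_subsingleton_isMaxOn_dotProduct {R : Set (ι → ℝ)} (hRne : R.Nonempty)
    (hR : IsCompact R) : Dense {v : ι → ℝ | {p ∈ R | IsMaxOn (· ⬝ᵥ v) R p}.Subsingleton} := by
  classical
  set e := dotProductDual ι
  have himage : ∀ {v p}, p ∈ R ∧ IsMaxOn (· ⬝ᵥ v) R p →
      e p ∈ e '' R ∧ IsMaxOn (fun ℓ : StrongDual ℝ (ι → ℝ) => ℓ v) (e '' R) (e p) :=
    fun hp => ⟨mem_image_of_mem e hp.1, forall_mem_image.2 fun _ hr => hp.2 hr⟩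
  refine (dense_setOf_subsingleton_isMaxOn (hRne.image e) (hR.image e.continuous).isBounded).mono
    fun v hv p hp q hq => ?_
  exact e.injective (hv (himage hp) (himage hq))

theorem strictConvexOn_sum_sq_sub (w : ι → ℝ) :
    StrictConvexOn ℝ univ fun r : ι → ℝ => ∑ i, (w i - r i) ^ 2 := by
  refine ⟨convex_univ, fun x _ y _ hxy a b ha hb hab => ?_⟩
  obtain ⟨i, hi⟩ := Function.ne_iff.1 hxy
  have key : ∀ j, (w j - (a • x + b • y) j) ^ 2 =
      a * (w j - x j) ^ 2 + b * (w j - y j) ^ 2 - a * b * (x j - y j) ^ 2 := by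
    intro j
    obtain rfl : b = 1 - a := by linarith
    simp only [Pi.add_apply, Pi.smul_apply, smul_eq_mul]
    ring
  calc ∑ j, (w j - (a • x + b • y) j) ^ 2
      < ∑ j, (a * (w j - x j) ^ 2 + b * (w j - y j) ^ 2) := by
        refine Finset.sum_lt_sum (fun j _ => ?_) ⟨i, Finset.mem_univ i, ?_⟩ <;> rw [key]
        · have := mul_nonneg (mul_nonneg ha.le hb.le) (sq_nonneg (x j - y j))
          linarith
        · have := mul_pos (mul_pos ha hb) (sq_pos_of_ne_zero (sub_ne_zero.2 hi))
          linarith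
    _ = a • ∑ j, (w j - x j) ^ 2 + b • ∑ j, (w j - y j) ^ 2 := by
        simp only [smul_eq_mul, Finset.mul_sum, Finset.sum_add_distrib]

end Coordinates

theorem mem_closure_setOf_forall_pos_exists_lt {ι : Type*} {C w : ι → ℝ} (hw : ∀ i, 0 ≤ w i)
    (hC : ¬ ∀ i, w i < C i) : w ∈ closure {v | (∀ i, 0 < v i) ∧ ∃ i, C i < v i} := by
  push Not at hC
  obtain ⟨i, hi⟩ := hC
  have hlim : Tendsto (fun ε : ℝ => w + ε • (1 : ι → ℝ)) (𝓝[>] 0) (𝓝 w) := by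
    have hcont : Continuous fun ε : ℝ => w + ε • (1 : ι → ℝ) := by fun_prop
    simpa using (hcont.tendsto 0).mono_left nhdsWithin_le_nhds
  refine mem_closure_of_tendsto hlim (eventually_nhdsWithin_of_forall fun ε (hε : 0 < ε) => ?_)
  refine ⟨fun j => ?_, i, ?_⟩ <;> simp only [Pi.add_apply, Pi.smul_apply, Pi.one_apply,
    smul_eq_mul, mul_one]
  · linarith [hw j]
  · linarith

theorem compl_setOf_forall_lt_subset_closure {K : ℕ} {C : Fin K → ℝ} {D : Set (Fin K → ℝ)}
    (hD : Dense D) : {w : Orth K | ∀ k, w.1 k < C k}ᶜ ⊆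
      closure ({w : Orth K | ∃ k, C k < w.1 k} ∩ {w | w.1 ∈ D}) := by
  intro w hw
  have hV : IsOpen {v : Fin K → ℝ | (∀ k, 0 < v k) ∧ ∃ k, C k < v k} :=
    (isOpen_setOf_forall_lt continuous_const continuous_id).inter
      (isOpen_setOf_exists_lt continuous_const continuous_id)
  rw [closure_subtype]
  refine closure_mono ?_ (closure_minimal (hD.open_subset_closure_inter hV) isClosed_closure
    (mem_closure_setOf_forall_pos_exists_lt w.2 hw))
  rintro v ⟨⟨hpos, hk⟩, hvD⟩
  exact ⟨⟨v, fun k => (hpos k).le⟩, ⟨hk, hvD⟩, rfl⟩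

theorem wc_maxweight_quasicontinuous_selection_general
    (K : ℕ) (R : Set (Fin K → ℝ))
    (hRne : R.Nonempty) (hRcomp : IsCompact R) (hRconv : Convex ℝ R)
    (hRpos : ∀ r ∈ R, ∀ k, 0 ≤ r k)
    (C : Fin K → ℝ) :
    ∃ H : Orth K → Orth K, QuasiContinuous H ∧
      ∀ w : Orth K,
        ((∀ k, w.1 k < C k) →
          ((H w).1 ∈ R ∧
            ∀ r ∈ R, ∑ k, (w.1 k - (H w).1 k) ^ 2 ≤ ∑ k, (w.1 k - r k) ^ 2)) ∧
        ((¬ ∀ k, w.1 k < C k) →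
          ((H w).1 ∈ R ∧ ∀ r ∈ R, ip r w.1 ≤ ip (H w).1 w.1)) := by
  have hB : IsOpen {w : Orth K | ∀ k, w.1 k < C k} :=
    isOpen_setOf_forall_lt continuous_subtype_val continuous_const
  have hU : IsOpen {w : Orth K | ∃ k, C k < w.1 k} :=
    isOpen_setOf_exists_lt continuous_const continuous_subtype_val
  have hBU : Disjoint {w : Orth K | ∀ k, w.1 k < C k} {w : Orth K | ∃ k, C k < w.1 k} :=
    disjoint_left.2 fun w hw ⟨k, hk⟩ => lt_asymm hk (hw k)
  have hf : Continuous (uncurry fun (w : Orth K) (r : Fin K → ℝ) => r ⬝ᵥ w.1) := by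
    fun_prop
  have hg : Continuous fun q : Orth K × (Fin K → ℝ) => ∑ k, (q.1.1 k - q.2 k) ^ 2 :=
    (by fun_prop : Continuous fun q : (Fin K → ℝ) × (Fin K → ℝ) => ∑ k, (q.1 k - q.2 k) ^ 2).comp
      (continuous_subtype_val.prodMap continuous_id)
  obtain ⟨H, hHqc, hH⟩ := exists_quasiContinuous_selection_s1
    (f := fun (w : Orth K) r => r ⬝ᵥ w.1) (g := fun (w : Orth K) r => ∑ k, (w.1 k - r k) ^ 2)
    hRcomp hRne hf hg hB hU hBU
    (fun w _ p hp q hq =>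
      ((strictConvexOn_sum_sq_sub w.1).subset (subset_univ R) hRconv).eq_of_isMinOn
        hp.2 hq.2 hp.1 hq.1)
    (compl_setOf_forall_lt_subset_closure
      (dense_setOf_subsingleton_isMaxOn_dotProduct hRne hRcomp))
  refine ⟨fun w => ⟨H w, hRpos _ (hH w).1⟩, hHqc.subtype_mk _, fun w =>
    ⟨fun hw => ⟨(hH w).1, fun r hr => (hH w).2.1 hw hr⟩,
      fun hw => ⟨(hH w).1, fun r hr => (hH w).2.2 hw hr⟩⟩⟩

/-- There is a quasi-continuous work-conserving max-weight scheduler: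
on `Π_k [0, C^k)` it is the (Euclidean) metric projection onto `ℛ` (the point of `ℛ`
minimizing the Euclidean distance to `w`), and elsewhere it is a max-weight choice. -/
theorem wc_maxweight_quasicontinuous_selection
    (K : ℕ) (hK : 1 ≤ K) (R : Set (Fin K → ℝ))
    (hRne : R.Nonempty) (hRcomp : IsCompact R) (hRconv : Convex ℝ R)
    (hRpos : ∀ r ∈ R, ∀ k, 0 ≤ r k)
    (hRcc : ∀ r ∈ R, ∀ r' : Fin K → ℝ, (∀ k, 0 ≤ r' k) → (∀ k, r' k ≤ r k) → r' ∈ R)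
    (C : Fin K → ℝ) (hC : ∀ k, IsGreatest ((fun r => r k) '' R) (C k)) :
    ∃ H : Orth K → Orth K, QuasiContinuous H ∧
      ∀ w : Orth K,
        ((∀ k, w.1 k < C k) →
          ((H w).1 ∈ R ∧
            ∀ r ∈ R, ∑ k, (w.1 k - (H w).1 k) ^ 2 ≤ ∑ k, (w.1 k - r k) ^ 2)) ∧
        ((¬ ∀ k, w.1 k < C k) →
          ((H w).1 ∈ R ∧ ∀ r ∈ R, ip r w.1 ≤ ip (H w).1 w.1)) :=
  wc_maxweight_quasicontinuous_selection_general K R hRne hRcomp hRconv hRpos C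
end

section
/- Let K ≥ 1, C^1,…,C^K > 0, and let ℛ_s be the simplex rate region. Let H : ℝ₊^K → ℝ₊^K be quasi-continuous with H(w) ∈ argmax_{r∈ℛ_s} ⟨r,w⟩ for every w, and define H^wc by H^wc(w) = metric projection of w onto ℛ_s if w ∈ Π_{k=1}^K [0, C^k) and H^wc(w) = H(w) otherwise; assume H^wc is quasi-continuous. Then for every t ∈ ℕ the finite-horizon work-conserving workload map G_t^wc : (ℝ₊^K)^t → ℝ₊^K is quasi-continuous with respect to the product metric. -/
open Filter Topology MeasureTheory
open scoped ENNReal NNReal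

/-- Componentwise positive part, landing in the nonnegative orthant. -/
def posPart {K : ℕ} (w : Fin K → ℝ) : Orth K := ⟨fun k => max (w k) 0, fun k => le_max_right _ _⟩

def addO {K : ℕ} (a b : Orth K) : Orth K :=
  ⟨fun k => a.1 k + b.1 k, fun k => add_nonneg (a.2 k) (b.2 k)⟩

/-- The finite-horizon workload map under scheduler `H`, on the list of arrivals
`[a_1, …, a_t]` (`a_1` the most recent arrival):
`G_1(a_1) = a_1`, `G_t(a_1,…,a_t) = a_1 + [G_{t-1}(a_2,…,a_t) - H (G_{t-1}(a_2,…,a_t))]⁺`. -/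
def GwcL {K : ℕ} (H : Orth K → Orth K) : List (Orth K) → Orth K
  | [] => ⟨fun _ => 0, fun _ => le_rfl⟩
  | [a] => a
  | a :: b :: rest =>
      addO a (posPart ((GwcL H (b :: rest)).1 - (H (GwcL H (b :: rest))).1))

/-- The simplex rate region `ℛ_s = {r ∈ ℝ₊^K : ∑_k r^k / C^k ≤ 1}`. -/
def simplexRegion {K : ℕ} (C : Fin K → ℝ) : Set (Fin K → ℝ) :=
  {r | (∀ k, 0 ≤ r k) ∧ ∑ k, r k / C k ≤ 1}

/-
The recursion `G_{t+1}(a, b) = a + Ψ (G_t b)` with `Ψ w = [w - H^wc w]⁺` reduces the theorem to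
the quasi-continuity of `Ψ ∘ G_t`, proved by induction on `t`. What drives the induction is that
every `w` is a limit of continuity points `v` of `H^wc` lying strictly above `w`, with
`H^wc v → H^wc w`. Inside the box `∏ₖ [0, Cᵏ)`, `H^wc` is a metric projection onto a convex set,
hence continuous. Outside it `H^wc = H`, and a quasi-continuous maximising selector is always a
vertex `Cᵏ eₖ` at a maximal weighted coordinate `Cᵏ wᵏ`; moving `w` up so that this coordinate
becomes the strict maximum lands in an open set on which `H^wc` is constant. In the induction
step, given approximants `b'` of `b` for `Ψ ∘ G_t`, the new arrival `a' = v - Ψ (G_t b')` is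
nonnegative because `v` lies strictly above `a + Ψ (G_t b)`, and `G_{t+1}(a', b') = v`.
-/

section QuasiContinuity
variable {X Y Z W : Type*} [MetricSpace X] [MetricSpace Y] [MetricSpace Z] [MetricSpace W]

theorem Continuous.quasiContinuous {F : X → Y} (hF : Continuous F) : QuasiContinuous F :=
  fun x => ⟨fun _ => x, tendsto_const_nhds, tendsto_const_nhds, fun _ => hF.continuousAt⟩

theorem tendsto_of_dist_lt_one_div_succ {u : ℕ → X} {x : X}
    (h : ∀ n : ℕ, dist (u n) x < 1 / (n + 1)) : Tendsto u atTop (𝓝 x) :=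
  tendsto_iff_dist_tendsto_zero.2 <|
    squeeze_zero (fun _ => dist_nonneg) (fun n => (h n).le) tendsto_one_div_add_atTop_nhds_zero_nat

theorem quasiContinuousAt_of_forall_exists {F : X → Y} {x : X}
    (h : ∀ ε > 0, ∃ y, ContinuousAt F y ∧ dist y x < ε ∧ dist (F y) (F x) < ε) :
    QuasiContinuousAt F x := by
  choose u hcont hu hFu using fun n : ℕ => h (1 / (n + 1)) Nat.one_div_pos_of_nat
  exact ⟨u, tendsto_of_dist_lt_one_div_succ hu, tendsto_of_dist_lt_one_div_succ hFu, hcont⟩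

theorem QuasiContinuous.comp_homeomorph {F : Y → Z} (hF : QuasiContinuous F) (e : X ≃ₜ Y) :
    QuasiContinuous fun x => F (e x) := by
  intro x
  obtain ⟨u, hu, hFu, hcont⟩ := hF (e x)
  refine ⟨fun n => e.symm (u n), ?_, by simpa using hFu, fun n => ?_⟩
  · simpa only [e.symm_apply_apply, Function.comp_def] using
      (e.symm.continuous.tendsto (e x)).comp hu
  · exact ContinuousAt.comp (g := F) (by simpa using hcont n) e.continuous.continuousAt

theorem Continuous.comp_quasiContinuous_snd {g : Y × Z → W} {Φ : X → Z} (hg : Continuous g)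
    (hΦ : QuasiContinuous Φ) : QuasiContinuous fun p : Y × X => g (p.1, Φ p.2) := by
  rintro ⟨y, x⟩
  obtain ⟨u, hu, hΦu, hcont⟩ := hΦ x
  exact ⟨fun n => (y, u n), tendsto_const_nhds.prodMk_nhds hu,
    (hg.tendsto _).comp (tendsto_const_nhds.prodMk_nhds hΦu),
    fun n => hg.continuousAt.comp (continuousAt_fst.prodMk (hcont n).snd')⟩

end QuasiContinuity

def consHomeomorph (α : Type*) [TopologicalSpace α] (n : ℕ) :
    (Fin (n + 1) → α) ≃ₜ α × (Fin n → α) where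
  toEquiv := (Fin.consEquiv fun _ => α).symm
  continuous_toFun := (continuous_apply 0).prodMk (continuous_pi fun i => continuous_apply i.succ)
  continuous_invFun := Continuous.finCons (A := fun _ => α) continuous_fst continuous_snd

theorem norm_sub_le_of_forall_norm_sub_le {E : Type*} [NormedAddCommGroup E]
    [InnerProductSpace ℝ E] {s : Set E} (hs : Convex ℝ s) {u u' p p' : E} (hp : p ∈ s)
    (hp' : p' ∈ s) (h : ∀ r ∈ s, ‖u - p‖ ≤ ‖u - r‖) (h' : ∀ r ∈ s, ‖u' - p'‖ ≤ ‖u' - r‖) :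
    ‖p - p'‖ ≤ ‖u - u'‖ := by
  have variational : ∀ {u p : E}, p ∈ s → (∀ r ∈ s, ‖u - p‖ ≤ ‖u - r‖) →
      ∀ r ∈ s, inner ℝ (u - p) (r - p) ≤ 0 := fun {u p} hp h =>
    have : Nonempty s := ⟨⟨p, hp⟩⟩
    (norm_eq_iInf_iff_real_inner_le_zero hs hp).1 <| le_antisymm
      (le_ciInf fun r => h r r.2)
      (ciInf_le (f := fun r : s => ‖u - r‖) ⟨0, by rintro _ ⟨r, rfl⟩; positivity⟩ ⟨p, hp⟩)
  have h1 := variational hp h p' hp'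
  have h2 := variational hp' h' p hp
  have key : ‖p - p'‖ ^ 2 ≤ inner ℝ (u - u') (p - p') := by
    rw [← real_inner_self_eq_norm_sq]
    have : inner ℝ (u - u') (p - p') - inner ℝ (p - p') (p - p')
        = - inner ℝ (u - p) (p' - p) - inner ℝ (u' - p') (p - p') := by
      simp only [inner_sub_left, inner_sub_right, real_inner_comm]; ring
    linarith
  have := key.trans (real_inner_le_norm _ _)
  nlinarith [norm_nonneg (p - p'), norm_nonneg (u - u')]

namespace Orth
variable {K : ℕ}

theorem posPart_val (w : Orth K) : (posPart w.1 : Orth K) = w :=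
  Subtype.ext <| funext fun k => max_eq_left (w.2 k)

theorem continuous_posPart : Continuous (posPart : (Fin K → ℝ) → Orth K) :=
  (continuous_pi fun k => (continuous_apply k).max continuous_const).subtype_mk _

theorem dist_posPart_le (x y : Fin K → ℝ) : dist (posPart x : Orth K) (posPart y) ≤ dist x y :=
  (dist_pi_le_iff dist_nonneg).2 fun k =>
    (abs_max_sub_max_le_abs _ _ _).trans ((Real.dist_eq _ _).symm.trans_le (dist_le_pi_dist x y k))

theorem continuous_addO : Continuous fun p : Orth K × Orth K => addO p.1 p.2 :=
  (continuous_subtype_val.comp continuous_fst |>.add <|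
    continuous_subtype_val.comp continuous_snd).subtype_mk _

def carryover (F : Orth K → Orth K) (w : Orth K) : Orth K := posPart (w.1 - (F w).1)

theorem carryover_zero (F : Orth K → Orth K) :
    carryover F ⟨fun _ => 0, fun _ => le_rfl⟩ = ⟨fun _ => 0, fun _ => le_rfl⟩ :=
  Subtype.ext <| funext fun k => max_eq_right <| by simpa using (F _).2 k

theorem continuousAt_carryover {F : Orth K → Orth K} {w : Orth K} (hF : ContinuousAt F w) :
    ContinuousAt (carryover F) w :=
  continuous_posPart.continuousAt.comp <|
    continuous_subtype_val.continuousAt.sub (continuous_subtype_val.continuousAt.comp hF)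

theorem dist_carryover_le (F : Orth K → Orth K) (w w' : Orth K) :
    dist (carryover F w) (carryover F w') ≤ dist w w' + dist (F w) (F w') :=
  (dist_posPart_le _ _).trans (dist_sub_sub_le _ _ _ _)

/-- The positive part only makes this total: it is inactive for `δ ≥ 0` and `c ≥ 0`. -/
def raise (w : Orth K) (c : Fin K → ℝ) (δ : ℝ) : Orth K := posPart (w.1 + δ • c)

theorem raise_apply {w : Orth K} {c : Fin K → ℝ} {δ : ℝ} (hδ : 0 ≤ δ) (hc : ∀ k, 0 ≤ c k)
    (k : Fin K) : (raise w c δ).1 k = w.1 k + δ * c k :=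
  max_eq_left <| add_nonneg (w.2 k) (mul_nonneg hδ (hc k))

theorem tendsto_raise (w : Orth K) (c : Fin K → ℝ) :
    Tendsto (raise w c) (𝓝[>] 0) (𝓝 w) := by
  have : Continuous (raise w c) := continuous_posPart.comp (by fun_prop)
  simpa only [raise, zero_smul, add_zero, posPart_val] using
    (this.tendsto 0).mono_left nhdsWithin_le_nhds

def QuasiContinuousFromAboveAt (F : Orth K → Orth K) (w : Orth K) : Prop :=
  ∀ ε > 0, ∃ v : Orth K, (∀ k, w.1 k < v.1 k) ∧ ContinuousAt F v ∧ dist v w < ε ∧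
    dist (F v) (F w) < ε

theorem quasiContinuousFromAboveAt_of_raise {F : Orth K → Orth K} {w : Orth K}
    {c : Fin K → ℝ} (hc : ∀ k, 0 < c k)
    (hcont : ∀ᶠ δ in 𝓝[>] 0, ContinuousAt F (raise w c δ))
    (hlim : Tendsto (fun δ => F (raise w c δ)) (𝓝[>] 0) (𝓝 (F w))) :
    QuasiContinuousFromAboveAt F w := by
  intro ε hε
  have habove : ∀ᶠ δ in 𝓝[>] 0, ∀ k, w.1 k < (raise w c δ).1 k := by
    filter_upwards [self_mem_nhdsWithin] with δ (hδ : 0 < δ) k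
    rw [raise_apply hδ.le (fun k => (hc k).le)]
    exact lt_add_of_pos_right _ (mul_pos hδ (hc k))
  obtain ⟨δ, hδ⟩ := (habove.and <| hcont.and <|
    ((tendsto_raise w c).eventually (Metric.ball_mem_nhds w hε)).and
      (hlim.eventually (Metric.ball_mem_nhds _ hε))).exists
  exact ⟨raise w c δ, hδ⟩

theorem quasiContinuousFromAboveAt_of_continuousOn {F : Orth K → Orth K} {U : Set (Orth K)}
    {w : Orth K} (hU : IsOpen U) (hF : ContinuousOn F U) (hw : w ∈ U) :
    QuasiContinuousFromAboveAt F w := by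
  refine quasiContinuousFromAboveAt_of_raise (c := fun _ => 1) (fun _ => one_pos) ?_
    ((hF.continuousAt (hU.mem_nhds hw)).tendsto.comp (tendsto_raise w _))
  exact ((tendsto_raise w _).eventually (hU.mem_nhds hw)).mono fun δ hδ =>
    hF.continuousAt (hU.mem_nhds hδ)

end Orth

section Workload
variable {K : ℕ}
open Orth

theorem GwcL_cons (F : Orth K → Orth K) (a : Orth K) (l : List (Orth K)) :
    GwcL F (a :: l) = addO a (carryover F (GwcL F l)) := by
  cases l with
  | nil =>
    refine Subtype.ext <| funext fun k => ?_
    simp only [GwcL, carryover_zero, addO, add_zero]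
  | cons b l => rfl

theorem GwcL_ofFn_succ (F : Orth K → Orth K) {n : ℕ} (a : Fin (n + 1) → Orth K) :
    GwcL F (List.ofFn a) = addO (a 0) (carryover F (GwcL F (List.ofFn (Fin.tail a)))) := by
  rw [List.ofFn_succ, GwcL_cons]
  rfl

/-- The approximant `a'` is chosen so that `a' + Φ b'` is a continuity point `v` of `F` strictly
above `a + Φ b`; the gap between the two absorbs the error of `Φ b'` and keeps `a' ≥ 0`. -/
theorem QuasiContinuous.carryover_addO {X : Type*} [MetricSpace X] {F : Orth K → Orth K}
    {Φ : X → Orth K}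
    (hF : ∀ w, QuasiContinuousFromAboveAt F w) (hΦ : QuasiContinuous Φ) :
    QuasiContinuous fun p : Orth K × X => carryover F (addO p.1 (Φ p.2)) := by
  rintro ⟨a, b⟩
  refine quasiContinuousAt_of_forall_exists fun ε hε => ?_
  set w := addO a (Φ b)
  obtain ⟨v, hwv, hFv, hvw, hFvw⟩ := hF w (ε / 2) (half_pos hε)
  obtain ⟨u, hu, hΦu, hΦcont⟩ := hΦ b
  have hroom : ∀ᶠ n in atTop, ∀ k, a.1 k + (Φ (u n)).1 k < v.1 k := by
    have hopen : IsOpen {q : Orth K | ∀ k, a.1 k + q.1 k < v.1 k} := by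
      simp only [Set.ofPred_forall]
      exact isOpen_iInter_of_finite fun k => isOpen_lt
        (continuous_const.add ((continuous_apply k).comp continuous_subtype_val)) continuous_const
    exact hΦu.eventually (hopen.mem_nhds hwv)
  obtain ⟨n, hn, hun, hΦun⟩ := (hroom.and <| (hu.eventually (Metric.ball_mem_nhds b hε)).and
    (hΦu.eventually (Metric.ball_mem_nhds _ (half_pos hε)))).exists
  let a' : Orth K := ⟨v.1 - (Φ (u n)).1, fun k => sub_nonneg.2 (by linarith [hn k, a.2 k])⟩
  have hv : addO a' (Φ (u n)) = v := Subtype.ext <| funext fun k => sub_add_cancel _ _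
  have ha : a.1 = w.1 - (Φ b).1 := funext fun k => (add_sub_cancel_right _ _).symm
  refine ⟨(a', u n), ?_, ?_, ?_⟩
  · refine (continuousAt_carryover hFv).comp_of_eq ?_ hv
    exact continuous_addO.continuousAt.comp (continuousAt_fst.prodMk (hΦcont n).snd')
  · refine max_lt ?_ hun
    calc dist a' a = dist (v.1 - (Φ (u n)).1) (w.1 - (Φ b).1) := by rw [Subtype.dist_eq, ha]
      _ ≤ dist v w + dist (Φ (u n)) (Φ b) := dist_sub_sub_le _ _ _ _
      _ < ε := by linarith
  · calc dist (carryover F (addO a' (Φ (u n)))) (carryover F w)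
        ≤ dist v w + dist (F v) (F w) := hv ▸ dist_carryover_le F v w
      _ < ε := by linarith

end Workload

section SimplexRegion
variable {K : ℕ} {C : Fin K → ℝ}

theorem convex_simplexRegion (C : Fin K → ℝ) : Convex ℝ (simplexRegion C) := by
  have hlin : IsLinearMap ℝ fun r : Fin K → ℝ => ∑ k, r k / C k :=
    ⟨fun r s => by simp only [Pi.add_apply, add_div, Finset.sum_add_distrib],
     fun c r => by simp only [Pi.smul_apply, smul_eq_mul, mul_div_assoc, Finset.mul_sum]⟩
  have hcoord : ∀ k, IsLinearMap ℝ fun r : Fin K → ℝ => r k := fun k =>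
    ⟨fun _ _ => rfl, fun _ _ => rfl⟩
  simp only [simplexRegion, Set.ofPred_and, Set.ofPred_forall]
  exact (convex_iInter fun k => convex_halfSpace_ge (hcoord k) 0).inter
    (convex_halfSpace_le hlin 1)

theorem single_mem_simplexRegion (hC : ∀ k, 0 < C k) (k : Fin K) :
    Pi.single k (C k) ∈ simplexRegion C := by
  refine ⟨fun j => ?_, ?_⟩
  · rcases eq_or_ne j k with rfl | hj
    · simpa using (hC j).le
    · simp [hj]
  · rw [Finset.sum_eq_single k (fun j _ hj => by simp [hj]) (by simp)]
    simp [(hC k).ne']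

theorem ip_single (k : Fin K) (c : ℝ) (x : Fin K → ℝ) : ip (Pi.single k c) x = c * x k :=
  single_dotProduct x c k

def IsStrictArgmax (C x : Fin K → ℝ) (k : Fin K) : Prop :=
  0 < C k * x k ∧ ∀ j ≠ k, C j * x j < C k * x k

/-- Writing `⟨r, x⟩ = ∑ (r j / C j) (C j x j)` with weights of total mass `≤ 1`, all the mass
must sit on the strict maximiser `k`. -/
theorem eq_single_of_isStrictArgmax (hC : ∀ k, 0 < C k) {r x : Fin K → ℝ} {k : Fin K}
    (hr : r ∈ simplexRegion C) (hx : IsStrictArgmax C x k) (hopt : C k * x k ≤ ip r x) :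
    r = Pi.single k (C k) := by
  obtain ⟨hr0, hr1⟩ := hr
  obtain ⟨hpos, hmax⟩ := hx
  set M := C k * x k
  have hweight : ∀ j, 0 ≤ r j / C j := fun j => div_nonneg (hr0 j) (hC j).le
  have hgap : ∀ j, 0 ≤ M - C j * x j := fun j => by
    rcases eq_or_ne j k with rfl | hj
    · exact (sub_self _).ge
    · exact sub_nonneg.2 (hmax j hj).le
  have hterm : ∀ j, r j / C j * (M - C j * x j) = r j / C j * M - r j * x j := fun j => by
    field_simp [(hC j).ne']
  have hloss : ∀ j ∈ Finset.univ, 0 ≤ r j / C j * (M - C j * x j) := fun j _ =>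
    mul_nonneg (hweight j) (hgap j)
  have hslack : 0 ≤ (1 - ∑ j, r j / C j) * M := mul_nonneg (sub_nonneg.2 hr1) hpos.le
  have hdefect : ∑ j, r j / C j * (M - C j * x j) + (1 - ∑ j, r j / C j) * M = 0 := by
    refine le_antisymm ?_ (add_nonneg (Finset.sum_nonneg hloss) hslack)
    simp only [hterm, Finset.sum_sub_distrib, ← Finset.sum_mul]
    linarith [show ip r x = ∑ j, r j * x j from rfl]
  obtain ⟨hsum, hfull⟩ := (add_eq_zero_iff_of_nonneg (Finset.sum_nonneg hloss) hslack).1 hdefect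
  have hzero : ∀ j ≠ k, r j = 0 := fun j hj => by
    have := (Finset.sum_eq_zero_iff_of_nonneg hloss).1 hsum j (Finset.mem_univ j)
    have hne : M - C j * x j ≠ 0 := (sub_pos.2 (hmax j hj)).ne'
    simpa [(hC j).ne', hne] using this
  have hk : r k / C k = 1 := by
    have h1 : ∑ j, r j / C j = 1 := by
      nlinarith [mul_eq_zero.1 hfull |>.resolve_right hpos.ne']
    rwa [Finset.sum_eq_single k (fun j _ hj => by simp [hzero j hj]) (by simp)] at h1
  funext j
  rcases eq_or_ne j k with rfl | hj
  · simpa [div_eq_one_iff_eq (hC j).ne'] using hk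
  · simp [hj, hzero j hj]

theorem eventually_isStrictArgmax {x : Orth K} {k : Fin K} (hx : IsStrictArgmax C x.1 k) :
    ∀ᶠ y : Orth K in 𝓝 x, IsStrictArgmax C y.1 k := by
  have hcoord : ∀ j, Continuous fun y : Orth K => C j * y.1 j := fun j =>
    continuous_const.mul ((continuous_apply j).comp continuous_subtype_val)
  refine (continuousAt_const.eventually_lt (hcoord k).continuousAt hx.1).and
    (Filter.eventually_all.2 fun j => ?_)
  rcases eq_or_ne j k with rfl | hj
  · exact Eventually.of_forall fun _ h => absurd rfl h
  · exact ((hcoord j).continuousAt.eventually_lt (hcoord k).continuousAt (hx.2 j hj)).mono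
      fun _ h _ => h

end SimplexRegion

section Selector
variable {K : ℕ} {C : Fin K → ℝ} {H : Orth K → Orth K}
open Orth

theorem selector_eq_single (hC : ∀ k, 0 < C k)
    (hHsel : ∀ w : Orth K, (H w).1 ∈ simplexRegion C ∧
      ∀ r ∈ simplexRegion C, ip r w.1 ≤ ip (H w).1 w.1)
    {x : Orth K} {k : Fin K} (hx : IsStrictArgmax C x.1 k) : (H x).1 = Pi.single k (C k) :=
  eq_single_of_isStrictArgmax hC (hHsel x).1 hx <| by
    simpa only [ip_single] using (hHsel x).2 _ (single_mem_simplexRegion hC k)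

/-- Raising a maximal coordinate makes the maximiser unique, and it is then the vertex. -/
theorem exists_selector_eq_single_of_continuousAt [Nonempty (Fin K)] (hC : ∀ k, 0 < C k)
    (hHsel : ∀ w : Orth K, (H w).1 ∈ simplexRegion C ∧
      ∀ r ∈ simplexRegion C, ip r w.1 ≤ ip (H w).1 w.1)
    {x : Orth K} (hx : ContinuousAt H x) : ∃ j, (H x).1 = Pi.single j (C j) := by
  obtain ⟨j, hj⟩ := Finite.exists_max fun j => C j * x.1 j
  refine ⟨j, tendsto_nhds_unique ((continuous_subtype_val.tendsto _).comp
    (hx.tendsto.comp (tendsto_raise x (Pi.single j 1)))) (tendsto_const_nhds.congr' ?_)⟩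
  filter_upwards [self_mem_nhdsWithin] with δ (hδ : 0 < δ)
  have hsingle : (0 : Fin K → ℝ) ≤ Pi.single j 1 := Pi.single_nonneg.2 zero_le_one
  have hval := raise_apply (w := x) hδ.le hsingle
  have hCδ := mul_pos (hC j) hδ
  refine (selector_eq_single hC hHsel ⟨?_, fun i hi => ?_⟩).symm
  · rw [hval]
    simpa [mul_add] using add_pos_of_nonneg_of_pos (mul_nonneg (hC j).le (x.2 j)) hCδ
  · rw [hval, hval]
    simpa [hi, mul_add] using (hj i).trans_lt (lt_add_of_pos_right _ hCδ)

/-- The vertices `H (u n)` converge to `H w`, and there are only finitely many vertices. -/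
theorem exists_selector_eq_single [Nonempty (Fin K)] (hC : ∀ k, 0 < C k)
    (hHqc : QuasiContinuous H)
    (hHsel : ∀ w : Orth K, (H w).1 ∈ simplexRegion C ∧
      ∀ r ∈ simplexRegion C, ip r w.1 ≤ ip (H w).1 w.1) (w : Orth K) :
    ∃ k, (H w).1 = Pi.single k (C k) ∧ ∀ j, C j * w.1 j ≤ C k * w.1 k := by
  obtain ⟨u, -, hHu, hcont⟩ := hHqc w
  obtain ⟨k, hk⟩ : (H w).1 ∈ Set.range fun k => Pi.single k (C k) :=
    (Set.finite_range _).isClosed.mem_of_tendsto ((continuous_subtype_val.tendsto _).comp hHu)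
      (Eventually.of_forall fun n =>
        (exists_selector_eq_single_of_continuousAt hC hHsel (hcont n)).imp fun _ h => h.symm)
  refine ⟨k, hk.symm, fun j => ?_⟩
  simpa only [← hk, ip_single] using (hHsel w).2 _ (single_mem_simplexRegion hC j)

end Selector

section WorkConserving
variable {K : ℕ} {C : Fin K → ℝ} {Hwc : Orth K → Orth K}
open Orth

/-- The box `∏ₖ [0, Cᵏ)` of the paper. -/
def capacityBox (C : Fin K → ℝ) : Set (Orth K) := {w | ∀ k, w.1 k < C k}

theorem isOpen_capacityBox (C : Fin K → ℝ) : IsOpen (capacityBox C) := by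
  simp only [capacityBox, Set.ofPred_forall]
  exact isOpen_iInter_of_finite fun k =>
    isOpen_lt ((continuous_apply k).comp continuous_subtype_val) continuous_const

theorem continuousOn_capacityBox
    (hproj : ∀ w : Orth K, w ∈ capacityBox C → (Hwc w).1 ∈ simplexRegion C ∧
      ∀ r ∈ simplexRegion C, ∑ k, (w.1 k - (Hwc w).1 k) ^ 2 ≤ ∑ k, (w.1 k - r k) ^ 2) :
    ContinuousOn Hwc (capacityBox C) := by
  let ι : (Fin K → ℝ) → EuclideanSpace ℝ (Fin K) := WithLp.toLp 2
  have hnorm : ∀ x y : Fin K → ℝ, ‖ι x - ι y‖ ^ 2 = ∑ k, (x k - y k) ^ 2 := fun x y => by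
    simp [ι, EuclideanSpace.norm_sq_eq]
  have hmin : ∀ u ∈ capacityBox C, ∀ r ∈ WithLp.ofLp ⁻¹' simplexRegion C,
      ‖ι u.1 - ι (Hwc u).1‖ ≤ ‖ι u.1 - r‖ := fun u hu r hr => by
    rw [← sq_le_sq₀ (norm_nonneg _) (norm_nonneg _), hnorm, ← WithLp.toLp_ofLp 2 r, hnorm]
    exact (hproj u hu).2 _ hr
  have hlip : ∀ u ∈ capacityBox C, ∀ u' ∈ capacityBox C,
      dist (Hwc u) (Hwc u') ≤ dist (ι u.1) (ι u'.1) := fun u hu u' hu' => calc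
    dist (Hwc u) (Hwc u') ≤ dist (ι (Hwc u).1) (ι (Hwc u').1) := by
      have := (PiLp.lipschitzWith_ofLp 2 _).dist_le_mul (ι (Hwc u).1) (ι (Hwc u').1)
      rwa [NNReal.coe_one, one_mul] at this
    _ ≤ dist (ι u.1) (ι u'.1) := by
      simp only [dist_eq_norm]
      exact norm_sub_le_of_forall_norm_sub_le ((convex_simplexRegion C).linear_preimage
        (WithLp.linearEquiv 2 ℝ (Fin K → ℝ)).toLinearMap) (hproj u hu).1 (hproj u' hu').1
        (hmin u hu) (hmin u' hu')
  intro u hu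
  refine tendsto_iff_dist_tendsto_zero.2 <|
    squeeze_zero' (Eventually.of_forall fun _ => dist_nonneg)
    (eventually_mem_nhdsWithin.mono fun x hx => hlip x hx u hu) ?_
  exact tendsto_iff_dist_tendsto_zero.1
    (((PiLp.continuous_toLp 2 _).comp continuous_subtype_val).continuousWithinAt (x := u))

/-- Outside the box `Hwc = H = C k₁ • e k₁` with `k₁` a maximal weighted coordinate of `w`;
raising `w` so that `k₁` becomes strictly maximal lands where `Hwc` is locally that constant. -/
theorem quasiContinuousFromAboveAt_of_not_mem_capacityBox {H : Orth K → Orth K}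
    (hC : ∀ k, 0 < C k) (hHqc : QuasiContinuous H)
    (hHsel : ∀ w : Orth K, (H w).1 ∈ simplexRegion C ∧
      ∀ r ∈ simplexRegion C, ip r w.1 ≤ ip (H w).1 w.1)
    (hHwc : ∀ w, w ∉ capacityBox C → Hwc w = H w) {w : Orth K} (hw : w ∉ capacityBox C) :
    QuasiContinuousFromAboveAt Hwc w := by
  obtain ⟨k₀, hk₀⟩ : ∃ k₀, C k₀ ≤ w.1 k₀ := by simpa [capacityBox] using hw
  have : Nonempty (Fin K) := ⟨k₀⟩
  obtain ⟨k₁, hk₁, hmax⟩ := exists_selector_eq_single hC hHqc hHsel w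
  have hloc : ∀ v : Orth K, C k₀ < v.1 k₀ → IsStrictArgmax C v.1 k₁ → Hwc v = Hwc w :=
    fun v hv₀ hv₁ => Subtype.ext <| by
      rw [hHwc v fun h => (h k₀).not_gt hv₀, hHwc w hw, selector_eq_single hC hHsel hv₁, hk₁]
  have hnear : ∀ v : Orth K, C k₀ < v.1 k₀ → IsStrictArgmax C v.1 k₁ →
      ∀ᶠ v' in 𝓝 v, Hwc v' = Hwc w := fun v hv₀ hv₁ =>
    ((continuousAt_const.eventually_lt
      ((continuous_apply k₀).comp continuous_subtype_val).continuousAt hv₀).and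
      (eventually_isStrictArgmax hv₁)).mono fun v' h => hloc v' h.1 h.2
  let c : Fin K → ℝ := fun j => (if j = k₁ then 2 else 1) / C j
  have hc : ∀ j, 0 < c j := fun j => div_pos (by split_ifs <;> norm_num) (hC j)
  have hraise : ∀ δ > 0, C k₀ < (raise w c δ).1 k₀ ∧ IsStrictArgmax C (raise w c δ).1 k₁ := by
    intro δ hδ
    have hval := raise_apply (w := w) hδ.le fun j => (hc j).le
    have hweighted : ∀ j, C j * (raise w c δ).1 j = C j * w.1 j + δ * (if j = k₁ then 2 else 1) :=
      fun j => by rw [hval]; simp only [c]; field_simp [(hC j).ne']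
    refine ⟨by rw [hval]; nlinarith [hc k₀], ?_, fun j hj => ?_⟩
    · rw [hweighted, if_pos rfl]; nlinarith [mul_nonneg (hC k₁).le (w.2 k₁)]
    · rw [hweighted, hweighted, if_neg hj, if_pos rfl]; linarith [hmax j]
  refine quasiContinuousFromAboveAt_of_raise hc ?_ (tendsto_const_nhds.congr' ?_)
  · filter_upwards [self_mem_nhdsWithin] with δ hδ
    exact continuousAt_const.congr <|
      ((hnear _ (hraise δ hδ).1 (hraise δ hδ).2).mono fun _ h => h.symm)
  · filter_upwards [self_mem_nhdsWithin] with δ hδ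
    exact (hloc _ (hraise δ hδ).1 (hraise δ hδ).2).symm

end WorkConserving

theorem finite_horizon_wc_workload_quasicontinuous_general
    (K : ℕ) (C : Fin K → ℝ) (hC : ∀ k, 0 < C k)
    (H Hwc : Orth K → Orth K)
    (hHqc : QuasiContinuous H)
    (hHsel : ∀ w : Orth K, (H w).1 ∈ simplexRegion C ∧
      ∀ r ∈ simplexRegion C, ip r w.1 ≤ ip (H w).1 w.1)
    (hHwcdef : ∀ w : Orth K,
      ((∀ k, w.1 k < C k) →
        ((Hwc w).1 ∈ simplexRegion C ∧
          ∀ r ∈ simplexRegion C,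
            ∑ k, (w.1 k - (Hwc w).1 k) ^ 2 ≤ ∑ k, (w.1 k - r k) ^ 2)) ∧
      ((¬ ∀ k, w.1 k < C k) → Hwc w = H w))
    (t : ℕ) :
    QuasiContinuous (fun a : Fin t → Orth K => GwcL Hwc (List.ofFn a)) := by
  have hHwc : ∀ w, Orth.QuasiContinuousFromAboveAt Hwc w := fun w => by
    by_cases hw : w ∈ capacityBox C
    · exact Orth.quasiContinuousFromAboveAt_of_continuousOn (isOpen_capacityBox C)
        (continuousOn_capacityBox fun w => (hHwcdef w).1) hw
    · exact quasiContinuousFromAboveAt_of_not_mem_capacityBox hC hHqc hHsel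
        (fun w => (hHwcdef w).2) hw
  have hconst : ∀ G : (Fin 0 → Orth K) → Orth K, QuasiContinuous G := fun G =>
    (continuous_of_const fun _ _ => congrArg G (Subsingleton.elim _ _)).quasiContinuous
  have hcarry : ∀ n, QuasiContinuous fun a : Fin n → Orth K =>
      Orth.carryover Hwc (GwcL Hwc (List.ofFn a)) := by
    intro n
    induction n with
    | zero => exact hconst _
    | succ n ih =>
      simp only [GwcL_ofFn_succ]
      exact (ih.carryover_addO hHwc).comp_homeomorph (consHomeomorph _ n)
  cases t with
  | zero => exact hconst _
  | succ n =>
    simp only [GwcL_ofFn_succ]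
    exact (Orth.continuous_addO.comp_quasiContinuous_snd (hcarry n)).comp_homeomorph
      (consHomeomorph _ n)

/-- For the simplex rate region, the finite-horizon work-conserving
workload maps `G_t^wc : (ℝ₊^K)^t → ℝ₊^K` are quasi-continuous (product metric on the
domain). -/
theorem finite_horizon_wc_workload_quasicontinuous
    (K : ℕ) (hK : 1 ≤ K) (C : Fin K → ℝ) (hC : ∀ k, 0 < C k)
    (H Hwc : Orth K → Orth K)
    (hHqc : QuasiContinuous H)
    (hHsel : ∀ w : Orth K, (H w).1 ∈ simplexRegion C ∧
      ∀ r ∈ simplexRegion C, ip r w.1 ≤ ip (H w).1 w.1)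
    (hHwcdef : ∀ w : Orth K,
      ((∀ k, w.1 k < C k) →
        ((Hwc w).1 ∈ simplexRegion C ∧
          ∀ r ∈ simplexRegion C,
            ∑ k, (w.1 k - (Hwc w).1 k) ^ 2 ≤ ∑ k, (w.1 k - r k) ^ 2)) ∧
      ((¬ ∀ k, w.1 k < C k) → Hwc w = H w))
    (hHwcqc : QuasiContinuous Hwc)
    (t : ℕ) (ht : 1 ≤ t) :
    QuasiContinuous (fun a : Fin t → Orth K => GwcL Hwc (List.ofFn a)) :=
  finite_horizon_wc_workload_quasicontinuous_general K C hC H Hwc hHqc hHsel hHwcdef t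
end

section
/- Let K ≥ 1, ℛ ⊆ ℝ₊^K a nonempty compact convex coordinate-convex rate region, and t ∈ ℕ. Then there exists a quasi-continuous function G_t : (ℝ₊^K)^t → ℝ₊^K (with respect to the product metric) such that G_t(a) ∈ 𝒢_t(a) for every a ∈ (ℝ₊^K)^t, where 𝒢_t is the achievable max-weight workload correspondence. -/
open Filter Topology MeasureTheory
open scoped ENNReal NNReal

/-- The achievable max-weight workload correspondence `𝒢_t`, on arrival lists
`[a_1, …, a_t]`: `𝒢_1(a_1) = {a_1}` and
`𝒢_t(a_1,…,a_t) = {a_1 + [w − r]⁺ : w ∈ 𝒢_{t−1}(a_2,…,a_t), r ∈ argmax_{ρ∈R} ⟨ρ,w⟩}`. -/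
def GSetL {K : ℕ} (R : Set (Fin K → ℝ)) : List (Orth K) → Set (Orth K)
  | [] => {⟨fun _ => 0, fun _ => le_rfl⟩}
  | [a] => {a}
  | a :: b :: rest =>
      {z | ∃ w ∈ GSetL R (b :: rest), ∃ r ∈ R,
        (∀ ρ ∈ R, ip ρ w.1 ≤ ip r w.1) ∧ z = addO a (posPart (w.1 - r))}

/-!
The support function `σ x = max_{r ∈ R} ⟨r, x⟩` of the compact set `R` is Lipschitz, hence
differentiable off a null set (Rademacher). Where `σ` is differentiable the max-weight rate is
unique (it is `∇σ`), so every selection of max-weight rates is continuous there. Choose the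
selection `H` so that each `H w` is the limit of `H` along differentiability points approaching
`w` from strictly above, and take `G_t` to be the workload map driven by `H`.

`G_t` is continuous at arrival sequences all of whose intermediate workloads are
differentiability points, and every arrival sequence is a limit of such sequences along which
`G_t` converges. This goes by induction on `t`: given approximations of the older arrivals, the
newest arrival can be chosen so that the new workload is exactly a prescribed differentiability
point slightly above the target workload; approaching from strictly above is what keeps that
arrival nonnegative.
-/

namespace MaxWeight

variable {K : ℕ}

noncomputable def ipCLM : (Fin K → ℝ) →L[ℝ] (Fin K → ℝ) →L[ℝ] ℝ :=
  (dotProductBilin ℝ ℝ).toContinuousBilinearMap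

lemma ipCLM_apply (r x : Fin K → ℝ) : ipCLM r x = ip r x := rfl

lemma continuous_ip : Continuous fun p : (Fin K → ℝ) × (Fin K → ℝ) => ip p.1 p.2 :=
  ipCLM.continuous₂

lemma ip_single (r : Fin K → ℝ) (k : Fin K) : ip r (Pi.single k 1) = r k :=
  (dotProduct_single (v := r) 1 k).trans (mul_one _)

section SupportFunction

variable {R : Set (Fin K → ℝ)} {x : Fin K → ℝ} {r : Fin K → ℝ}

def maxWeightRates (R : Set (Fin K → ℝ)) (x : Fin K → ℝ) : Set (Fin K → ℝ) :=
  {r | r ∈ R ∧ ∀ ρ ∈ R, ip ρ x ≤ ip r x}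

lemma maxWeightRates_nonempty (hRne : R.Nonempty) (hRcomp : IsCompact R) (x : Fin K → ℝ) :
    (maxWeightRates R x).Nonempty := by
  obtain ⟨r, hr, hmax⟩ := hRcomp.exists_isMaxOn hRne (ipCLM.flip x).continuous.continuousOn
  exact ⟨r, hr, fun ρ hρ => hmax hρ⟩

lemma isClosed_maxWeightRates_graph (hR : IsClosed R) :
    IsClosed {p : (Fin K → ℝ) × (Fin K → ℝ) | p.2 ∈ maxWeightRates R p.1} := by
  have hset : {p : (Fin K → ℝ) × (Fin K → ℝ) | p.2 ∈ maxWeightRates R p.1} =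
      Prod.snd ⁻¹' R ∩ ⋂ ρ ∈ R, {p | ip ρ p.1 ≤ ip p.2 p.1} := by
    ext; simp [maxWeightRates]
  rw [hset]
  refine (hR.preimage continuous_snd).inter (isClosed_biInter fun ρ _ => isClosed_le ?_ ?_)
  · exact continuous_ip.comp (continuous_const.prodMk continuous_fst)
  · exact continuous_ip.comp (continuous_snd.prodMk continuous_fst)

lemma mem_maxWeightRates_of_tendsto {ι : Type*} {l : Filter ι} [l.NeBot] (hR : IsClosed R)
    {xs rs : ι → Fin K → ℝ} (hx : Tendsto xs l (𝓝 x)) (hr : Tendsto rs l (𝓝 r))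
    (hmem : ∀ i, rs i ∈ maxWeightRates R (xs i)) : r ∈ maxWeightRates R x :=
  (isClosed_maxWeightRates_graph hR).mem_of_tendsto (hx.prodMk_nhds hr) (.of_forall hmem)

noncomputable def supportFn (R : Set (Fin K → ℝ)) (x : Fin K → ℝ) : ℝ :=
  sSup ((fun r => ip r x) '' R)

lemma ip_le_supportFn (hRcomp : IsCompact R) (hr : r ∈ R) (x : Fin K → ℝ) :
    ip r x ≤ supportFn R x :=
  le_csSup (hRcomp.image (ipCLM.flip x).continuous).bddAbove ⟨r, hr, rfl⟩

lemma supportFn_eq_ip (hr : r ∈ maxWeightRates R x) : supportFn R x = ip r x :=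
  IsGreatest.csSup_eq ⟨⟨r, hr.1, rfl⟩, by rintro _ ⟨ρ, hρ, rfl⟩; exact hr.2 ρ hρ⟩

lemma exists_lipschitzWith_supportFn (hRne : R.Nonempty) (hRcomp : IsCompact R) :
    ∃ C, LipschitzWith C (supportFn R) := by
  obtain ⟨C, hC⟩ := (hRcomp.image ipCLM.continuous).isBounded.exists_norm_le
  refine ⟨C.toNNReal, LipschitzWith.of_le_add_mul' C fun x y => csSup_le (hRne.image _) ?_⟩
  rintro _ ⟨r, hr, rfl⟩
  have hbound : ipCLM r (x - y) ≤ C * dist x y :=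
    calc ipCLM r (x - y) ≤ ‖ipCLM r‖ * ‖x - y‖ :=
          (Real.le_norm_self _).trans ((ipCLM r).le_opNorm _)
      _ ≤ C * dist x y := by rw [dist_eq_norm]; gcongr; exact hC _ ⟨r, hr, rfl⟩
  calc ip r x = ip r y + ipCLM r (x - y) := by rw [map_sub, ipCLM_apply, ipCLM_apply]; ring
    _ ≤ supportFn R y + C * dist x y := add_le_add (ip_le_supportFn hRcomp hr y) hbound

lemma dense_differentiableAt_supportFn (hRne : R.Nonempty) (hRcomp : IsCompact R) :
    Dense {x | DifferentiableAt ℝ (supportFn R) x} := by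
  obtain ⟨C, hC⟩ := exists_lipschitzWith_supportFn hRne hRcomp
  exact Measure.dense_of_ae (μ := volume) hC.ae_differentiableAt

/-- Each maximizer `r` is the gradient of `supportFn R` at `x`, since `supportFn R - ⟨r, ·⟩`
attains its minimum `0` at `x`. -/
lemma eq_of_mem_maxWeightRates (hRcomp : IsCompact R) (hx : DifferentiableAt ℝ (supportFn R) x)
    {r₁ r₂ : Fin K → ℝ} (h₁ : r₁ ∈ maxWeightRates R x) (h₂ : r₂ ∈ maxWeightRates R x) :
    r₁ = r₂ := by
  have hgrad : ∀ r ∈ maxWeightRates R x, ipCLM r = fderiv ℝ (supportFn R) x := by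
    intro r hr
    have hmin : IsLocalMin (fun y => supportFn R y - ipCLM r y) x :=
      .of_forall fun y => by
        simp only [ipCLM_apply, supportFn_eq_ip hr, sub_self]
        exact sub_nonneg.2 (ip_le_supportFn hRcomp hr.1 y)
    exact (sub_eq_zero.1 (hmin.hasFDerivAt_eq_zero (hx.hasFDerivAt.sub (ipCLM r).hasFDerivAt))).symm
  funext k
  have h := congr($((hgrad r₁ h₁).trans (hgrad r₂ h₂).symm) (Pi.single k 1))
  simpa only [ipCLM_apply, ip_single] using h

end SupportFunction

section Selection

variable {R : Set (Fin K → ℝ)}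

lemma exists_seq_tendsto_of_forall_lt {ι : Type*} [Finite ι] {D : Set (ι → ℝ)} (hD : Dense D)
    (w : ι → ℝ) :
    ∃ v : ℕ → ι → ℝ, (∀ j, v j ∈ D ∧ ∀ k, w k < v j k) ∧ Tendsto v atTop (𝓝 w) := by
  set A : Set (ι → ℝ) := Set.univ.pi fun k => Set.Ioi (w k)
  have hA : IsOpen A := isOpen_set_pi Set.finite_univ fun k _ => isOpen_Ioi
  have hw : w ∈ closure (A ∩ D) :=
    closure_minimal (hD.open_subset_closure_inter hA) isClosed_closure <| by
      simp [A, closure_pi_set]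
  obtain ⟨v, hv, hlim⟩ := mem_closure_iff_seq_limit.1 hw
  exact ⟨v, fun j => ⟨(hv j).2, fun k => (hv j).1 k (Set.mem_univ k)⟩, hlim⟩

lemma tendsto_of_mem_maxWeightRates (hRcomp : IsCompact R) {x r : Fin K → ℝ}
    (hx : DifferentiableAt ℝ (supportFn R) x) {xs rs : ℕ → Fin K → ℝ}
    (hxs : Tendsto xs atTop (𝓝 x)) (hrs : ∀ n, rs n ∈ maxWeightRates R (xs n))
    (hr : r ∈ maxWeightRates R x) : Tendsto rs atTop (𝓝 r) := by
  refine tendsto_of_subseq_tendsto fun ns hns => ?_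
  obtain ⟨r', -, φ, hφ, hlim⟩ := hRcomp.tendsto_subseq fun n => (hrs (ns n)).1
  have hr' : r' ∈ maxWeightRates R x :=
    mem_maxWeightRates_of_tendsto hRcomp.isClosed (hxs.comp (hns.comp hφ.tendsto_atTop)) hlim
      fun n => hrs _
  exact ⟨φ, eq_of_mem_maxWeightRates hRcomp hx hr' hr ▸ hlim⟩

lemma continuousAt_of_mem_maxWeightRates (hRcomp : IsCompact R) {H : Orth K → Orth K}
    (hH : ∀ w, (H w).1 ∈ maxWeightRates R w.1) {w : Orth K}
    (hw : DifferentiableAt ℝ (supportFn R) w.1) : ContinuousAt H w :=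
  tendsto_iff_seq_tendsto.2 fun u hu => tendsto_subtype_rng.2 <|
    tendsto_of_mem_maxWeightRates hRcomp hw (tendsto_subtype_rng.1 hu) (fun n => hH (u n)) (hH w)

def IsLimitFromSmoothAbove (R : Set (Fin K → ℝ)) (H : Orth K → Orth K) : Prop :=
  ∀ w : Orth K, ∃ v : ℕ → Orth K,
    (∀ j, DifferentiableAt ℝ (supportFn R) (v j).1 ∧ ∀ k, w.1 k < (v j).1 k) ∧
      Tendsto v atTop (𝓝 w) ∧ Tendsto (H ∘ v) atTop (𝓝 (H w))

lemma exists_maxWeight_selection (hRne : R.Nonempty) (hRcomp : IsCompact R)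
    (hRpos : ∀ r ∈ R, ∀ k, 0 ≤ r k) :
    ∃ H : Orth K → Orth K,
      (∀ w, (H w).1 ∈ maxWeightRates R w.1) ∧ IsLimitFromSmoothAbove R H := by
  choose sel hsel using maxWeightRates_nonempty hRne hRcomp
  have happrox : ∀ w : Orth K, ∃ v : ℕ → Orth K,
      (∀ j, DifferentiableAt ℝ (supportFn R) (v j).1 ∧ ∀ k, w.1 k < (v j).1 k) ∧
        Tendsto v atTop (𝓝 w) := by
    intro w
    obtain ⟨v, hv, hlim⟩ :=
      exists_seq_tendsto_of_forall_lt (dense_differentiableAt_supportFn hRne hRcomp) w.1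
    exact ⟨fun j => ⟨v j, fun k => ((w.2 k).trans_lt ((hv j).2 k)).le⟩, hv,
      tendsto_subtype_rng.2 hlim⟩
  choose v hv hvlim using happrox
  have hlimit : ∀ w : Orth K, ∃ r ∈ maxWeightRates R w.1, ∃ φ : ℕ → ℕ, StrictMono φ ∧
      Tendsto (fun j => sel (v w (φ j)).1) atTop (𝓝 r) := by
    intro w
    obtain ⟨r, -, φ, hφ, hlim⟩ := hRcomp.tendsto_subseq fun j => (hsel (v w j).1).1
    exact ⟨r, mem_maxWeightRates_of_tendsto hRcomp.isClosed
      (tendsto_subtype_rng.1 ((hvlim w).comp hφ.tendsto_atTop)) hlim (fun j => hsel _), φ, hφ, hlim⟩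
  choose r hr φ hφ hlim using hlimit
  refine ⟨fun w => ⟨r w, fun k => hRpos _ (hr w).1 k⟩, hr, fun w => ⟨v w ∘ φ w,
    fun j => hv w _, (hvlim w).comp (hφ w).tendsto_atTop, tendsto_subtype_rng.2 ?_⟩⟩
  have hagree : ∀ j, r (v w (φ w j)) = sel (v w (φ w j)).1 := fun j =>
    eq_of_mem_maxWeightRates hRcomp (hv w _).1 (hr _) (hsel _)
  simpa only [Function.comp_apply, hagree] using hlim w

end Selection

section Workload

variable {R : Set (Fin K → ℝ)} {H : Orth K → Orth K}

def afterService (H : Orth K → Orth K) (w : Orth K) : Orth K := posPart (w.1 - (H w).1)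

lemma GwcL_ofFn_succ_succ {n : ℕ} (a : Fin (n + 2) → Orth K) :
    GwcL H (List.ofFn a) = addO (a 0) (afterService H (GwcL H (List.ofFn (Fin.tail a)))) := by
  simp only [List.ofFn_succ]
  rfl

lemma GwcL_mem_GSetL (hH : ∀ w, (H w).1 ∈ maxWeightRates R w.1) :
    ∀ l : List (Orth K), GwcL H l ∈ GSetL R l
  | [] => rfl
  | [_] => rfl
  | _ :: b :: rest => ⟨_, GwcL_mem_GSetL hH (b :: rest), _, (hH _).1, (hH _).2, rfl⟩

lemma continuous_posPart : Continuous (posPart (K := K)) :=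
  (continuous_pi fun k => (continuous_apply k).max continuous_const).subtype_mk _

lemma continuous_addO : Continuous fun p : Orth K × Orth K => addO p.1 p.2 :=
  Continuous.subtype_mk (f := fun p : Orth K × Orth K => fun k => p.1.1 k + p.2.1 k)
    (continuous_pi fun k =>
      ((continuous_apply k).comp (continuous_subtype_val.comp continuous_fst)).add
        ((continuous_apply k).comp (continuous_subtype_val.comp continuous_snd))) _

lemma tendsto_afterService {ι : Type*} {l : Filter ι} {v : ι → Orth K} {w : Orth K}
    (hv : Tendsto v l (𝓝 w)) (hHv : Tendsto (H ∘ v) l (𝓝 (H w))) :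
    Tendsto (afterService H ∘ v) l (𝓝 (afterService H w)) :=
  (continuous_posPart.tendsto _).comp
    ((tendsto_subtype_rng.1 hv).sub (tendsto_subtype_rng.1 hHv))

def SmoothWorkloads (R : Set (Fin K → ℝ)) (H : Orth K → Orth K) : List (Orth K) → Prop
  | [] => True
  | a :: l => DifferentiableAt ℝ (supportFn R) (GwcL H (a :: l)).1 ∧ SmoothWorkloads R H l

lemma smoothWorkloads_ofFn_succ {n : ℕ} {a : Fin (n + 1) → Orth K} :
    SmoothWorkloads R H (List.ofFn a) ↔ DifferentiableAt ℝ (supportFn R) (GwcL H (List.ofFn a)).1 ∧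
      SmoothWorkloads R H (List.ofFn (Fin.tail a)) := by
  rw [List.ofFn_succ]
  rfl

lemma continuousAt_GwcL_ofFn (hRcomp : IsCompact R) (hH : ∀ w, (H w).1 ∈ maxWeightRates R w.1) :
    ∀ {n : ℕ} (a : Fin (n + 1) → Orth K), SmoothWorkloads R H (List.ofFn (Fin.tail a)) →
      ContinuousAt (fun x : Fin (n + 1) → Orth K => GwcL H (List.ofFn x)) a
  | 0, _, _ => (continuous_apply 0).continuousAt
  | n + 1, a, ha => by
    obtain ⟨hdiff, hsmooth⟩ := smoothWorkloads_ofFn_succ.1 ha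
    have hW : ContinuousAt (fun x : Fin (n + 2) → Orth K => GwcL H (List.ofFn (Fin.tail x))) a :=
      (continuousAt_GwcL_ofFn hRcomp hH (Fin.tail a) hsmooth).comp
        (continuous_pi fun i => continuous_apply i.succ).continuousAt
    have hS : ContinuousAt (afterService H) (GwcL H (List.ofFn (Fin.tail a))) :=
      tendsto_afterService tendsto_id (continuousAt_of_mem_maxWeightRates hRcomp hH hdiff)
    have hpair : ContinuousAt (fun x : Fin (n + 2) → Orth K =>
        (x 0, afterService H (GwcL H (List.ofFn (Fin.tail x))))) a :=
      (continuous_apply 0).continuousAt.prodMk (hS.comp_of_eq hW rfl)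
    simp only [GwcL_ofFn_succ_succ]
    exact continuous_addO.continuousAt.comp hpair

/-- Pick, for each `v j`, an index `φ j` so late that `p (φ j) ≤ v j`; then `b j := v j - p (φ j)`
is nonnegative and tends to `c`. -/
lemma exists_addO_eq_of_tendsto {p v : ℕ → Orth K} {q c : Orth K}
    (hp : Tendsto p atTop (𝓝 q)) (hv : Tendsto v atTop (𝓝 (addO c q)))
    (hlt : ∀ j k, q.1 k < (v j).1 k) :
    ∃ φ : ℕ → ℕ, ∃ b : ℕ → Orth K, Tendsto φ atTop atTop ∧ Tendsto b atTop (𝓝 c) ∧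
      ∀ j, addO (b j) (p (φ j)) = v j := by
  have hev : ∀ j, ∀ᶠ m in atTop, ∀ k, (p m).1 k ≤ (v j).1 k := fun j =>
    eventually_all.2 fun k =>
      (((continuous_apply k).tendsto _).comp (tendsto_subtype_rng.1 hp)).eventually_le_const
        (hlt j k)
  choose M hM using fun j => eventually_atTop.1 (hev j)
  have hφ : Tendsto (fun j => max j (M j)) atTop atTop :=
    tendsto_atTop_mono (fun j => le_max_left _ _) tendsto_id
  refine ⟨fun j => max j (M j), fun j => ⟨(v j).1 - (p (max j (M j))).1,
    fun k => sub_nonneg.2 (hM j _ (le_max_right _ _) k)⟩, hφ, tendsto_subtype_rng.2 ?_,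
    fun j => Subtype.ext (funext fun k => ?_)⟩
  · have hc : c.1 = (addO c q).1 - q.1 := by
      funext k
      simp [addO]
    rw [hc]
    exact (tendsto_subtype_rng.1 hv).sub (tendsto_subtype_rng.1 (hp.comp hφ))
  · simp [addO]

lemma exists_seq_smoothWorkloads_tendsto (hHlim : IsLimitFromSmoothAbove R H) :
    ∀ {n : ℕ} (a : Fin (n + 1) → Orth K), ∃ u : ℕ → Fin (n + 1) → Orth K,
      Tendsto u atTop (𝓝 a) ∧ (∀ m, SmoothWorkloads R H (List.ofFn (u m))) ∧
      Tendsto (fun m => GwcL H (List.ofFn (u m))) atTop (𝓝 (GwcL H (List.ofFn a))) ∧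
      Tendsto (fun m => afterService H (GwcL H (List.ofFn (u m)))) atTop
        (𝓝 (afterService H (GwcL H (List.ofFn a))))
  | 0, a => by
    obtain ⟨v, hv, hvlim, hHv⟩ := hHlim (a 0)
    exact ⟨fun m _ => v m, tendsto_pi_nhds.2 fun i => Fin.eq_zero i ▸ hvlim,
      fun m => ⟨(hv m).1, trivial⟩, hvlim, tendsto_afterService hvlim hHv⟩
  | n + 1, a => by
    obtain ⟨u', hu', hsmooth', -, hS'⟩ := exists_seq_smoothWorkloads_tendsto hHlim (Fin.tail a)
    obtain ⟨v, hv, hvlim, hHv⟩ := hHlim (GwcL H (List.ofFn a))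
    rw [GwcL_ofFn_succ_succ] at hv
    have hlt : ∀ j k, (afterService H (GwcL H (List.ofFn (Fin.tail a)))).1 k < (v j).1 k :=
      fun j k => (le_add_of_nonneg_left ((a 0).2 k)).trans_lt ((hv j).2 k)
    obtain ⟨φ, b, hφ, hb, hbv⟩ := exists_addO_eq_of_tendsto hS'
      (by rwa [GwcL_ofFn_succ_succ] at hvlim) hlt
    have hGu : ∀ j, GwcL H (List.ofFn (Fin.cons (b j) (u' (φ j)) : Fin (n + 2) → Orth K)) = v j :=
      fun j => by rw [GwcL_ofFn_succ_succ, Fin.cons_zero, Fin.tail_cons, hbv]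
    refine ⟨fun j => Fin.cons (b j) (u' (φ j)), ?_, fun j => ?_, ?_, ?_⟩
    · simpa only [Fin.cons_self_tail, Function.comp_def] using
        Filter.Tendsto.finCons (A := fun _ => Orth K) hb (hu'.comp hφ)
    · rw [smoothWorkloads_ofFn_succ, hGu, Fin.tail_cons]
      exact ⟨(hv j).1, hsmooth' _⟩
    · simp only [hGu]
      exact hvlim
    · simp only [hGu]
      exact tendsto_afterService hvlim hHv

end Workload

end MaxWeight

theorem maxweight_workload_quasicontinuous_selection_general
    (K : ℕ) (R : Set (Fin K → ℝ))
    (hRne : R.Nonempty) (hRcomp : IsCompact R)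
    (hRpos : ∀ r ∈ R, ∀ k, 0 ≤ r k)
    (t : ℕ) :
    ∃ G : (Fin t → Orth K) → Orth K, QuasiContinuous G ∧
      ∀ a : Fin t → Orth K, G a ∈ GSetL R (List.ofFn a) := by
  obtain ⟨H, hH, hHlim⟩ := MaxWeight.exists_maxWeight_selection hRne hRcomp hRpos
  refine ⟨fun a => GwcL H (List.ofFn a), fun a => ?_, fun a => MaxWeight.GwcL_mem_GSetL hH _⟩
  cases t with
  | zero =>
    exact ⟨fun _ => a, tendsto_const_nhds, tendsto_const_nhds,
      fun _ => continuous_of_discreteTopology.continuousAt⟩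
  | succ n =>
    obtain ⟨u, hu, hsmooth, hG, -⟩ := MaxWeight.exists_seq_smoothWorkloads_tendsto hHlim a
    exact ⟨u, hu, hG, fun m => MaxWeight.continuousAt_GwcL_ofFn hRcomp hH (u m)
      (MaxWeight.smoothWorkloads_ofFn_succ.1 (hsmooth m)).2⟩

/-- There is a quasi-continuous selection `G_t` of the achievable
max-weight workload correspondence `𝒢_t`. -/
theorem maxweight_workload_quasicontinuous_selection
    (K : ℕ) (hK : 1 ≤ K) (R : Set (Fin K → ℝ))
    (hRne : R.Nonempty) (hRcomp : IsCompact R) (hRconv : Convex ℝ R)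
    (hRpos : ∀ r ∈ R, ∀ k, 0 ≤ r k)
    (hRcc : ∀ r ∈ R, ∀ r' : Fin K → ℝ, (∀ k, 0 ≤ r' k) → (∀ k, r' k ≤ r k) → r' ∈ R)
    (t : ℕ) (ht : 1 ≤ t) :
    ∃ G : (Fin t → Orth K) → Orth K, QuasiContinuous G ∧
      ∀ a : Fin t → Orth K, G a ∈ GSetL R (List.ofFn a) :=
  maxweight_workload_quasicontinuous_selection_general K R hRne hRcomp hRpos t
end

section
/- (Finite-horizon LDP under max-weight.) Let K ≥ 1, ℛ ⊆ ℝ₊^K a nonempty compact convex coordinate-convex rate region, t ∈ ℕ, and G_t : (ℝ₊^K)^t → ℝ₊^K a Borel-measurable quasi-continuous selection of the achievable max-weight workload correspondence, i.e., G_t(a) ∈ 𝒢_t(a) for all a. Let (A^L)_{L∈ℕ} be Borel random elements of (ℝ₊^K)^t satisfying the LDP with good rate function I_t^♯ that is continuous on (ℝ₊^K)^t. Then the sequence (G_t(A^L))_L satisfies the LDP on ℝ₊^K with good rate function I_t(b) = inf{I_t^♯(x) : x ∈ (ℝ₊^K)^t, b ∈ ^xG_t}. -/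
open Filter Topology MeasureTheory
open scoped ENNReal NNReal

/-- The cluster set `^xF` of `F` at `x`: all limits of `F` along sequences converging to `x`. -/
def clusterSet {X Y : Type*} [MetricSpace X] [MetricSpace Y] (F : X → Y) (x : X) : Set Y :=
  {y | ∃ u : ℕ → X, Tendsto u atTop (nhds x) ∧ Tendsto (fun n => F (u n)) atTop (nhds y)}

/-- A good rate function: lower semicontinuous with compact sublevel sets. -/
def GoodRateFunction {X : Type*} [TopologicalSpace X] (I : X → ℝ≥0∞) : Prop :=
  LowerSemicontinuous I ∧ ∀ c : ℝ≥0, IsCompact {x | I x ≤ (c : ℝ≥0∞)}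

/-- The sequence of random elements `A L` satisfies the large deviations principle with
good rate function `I`. -/
def SatisfiesLDP {Ω X : Type*} [MeasurableSpace Ω] [TopologicalSpace X] [MeasurableSpace X]
    (P : Measure Ω) (A : ℕ → Ω → X) (I : X → ℝ≥0∞) : Prop :=
  GoodRateFunction I ∧
  ∀ B : Set X, MeasurableSet B →
    (-((⨅ x ∈ interior B, I x : ℝ≥0∞) : EReal) ≤
      liminf (fun L : ℕ => (((L : ℝ)⁻¹ : ℝ) : EReal) * ENNReal.log (P ((A L) ⁻¹' B))) atTop) ∧
    (limsup (fun L : ℕ => (((L : ℝ)⁻¹ : ℝ) : EReal) * ENNReal.log (P ((A L) ⁻¹' B))) atTop ≤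
      -((⨅ x ∈ closure B, I x : ℝ≥0∞) : EReal))

/-!
The cluster sets of `G_t` form a closed correspondence `x ↦ ^xG_t` (its graph is the closure of
the graph of `G_t`), and since `G_t(a) ≤ a_1 + ⋯ + a_t` it is locally compactly bounded. For such
correspondences the pushed-forward infimum of a good rate function is again good, and the upper
bound of the contraction principle goes through with the closed set of arrivals having some
cluster value in `cl B`. For the lower bound, quasi-continuity places every arrival `x` with a
cluster value in `int B` in the closure of the open set of arrivals mapped stably into `int B`;
continuity of `I_t^♯` then makes its infimum over that open set at most `I_t^♯(x)`.
-/

section ClusterSet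

variable {X Y : Type*} [MetricSpace X] [MetricSpace Y] {F : X → Y}

def LocallyCompactlyBounded (F : X → Y) : Prop :=
  ∀ x, ∃ K : Set Y, IsCompact K ∧ ∀ᶠ y in 𝓝 x, F y ∈ K

noncomputable def clusterRate (F : X → Y) (I : X → ℝ≥0∞) (b : Y) : ℝ≥0∞ :=
  ⨅ (x : X) (_ : b ∈ clusterSet F x), I x

theorem self_mem_clusterSet (F : X → Y) (x : X) : F x ∈ clusterSet F x :=
  ⟨fun _ => x, tendsto_const_nhds, tendsto_const_nhds⟩

theorem mem_clusterSet_iff_mem_closure_graph {x : X} {b : Y} :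
    b ∈ clusterSet F x ↔ (x, b) ∈ closure (Set.range fun y => (y, F y)) := by
  rw [mem_closure_iff_seq_limit]
  constructor
  · rintro ⟨u, hu, hFu⟩
    exact ⟨fun n => (u n, F (u n)), fun n => ⟨u n, rfl⟩, hu.prodMk_nhds hFu⟩
  · rintro ⟨p, hp, hlim⟩
    choose u hu using hp
    have hpu : p = fun n => (u n, F (u n)) := funext fun n => (hu n).symm
    subst hpu
    exact ⟨u, (continuous_fst.tendsto _).comp hlim, (continuous_snd.tendsto _).comp hlim⟩

theorem isClosed_setOf_mem_clusterSet : IsClosed {p : X × Y | p.2 ∈ clusterSet F p.1} := by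
  simp only [mem_clusterSet_iff_mem_closure_graph, Prod.mk.eta, Set.ofPred_mem_eq]
  exact isClosed_closure

theorem clusterSet_subset_of_preimage_mem_nhds {x : X} {K : Set Y} (hK : IsClosed K)
    (h : F ⁻¹' K ∈ 𝓝 x) : clusterSet F x ⊆ K := by
  rintro b ⟨u, hu, hFu⟩
  exact hK.mem_of_tendsto hFu (hu.eventually h)

theorem LocallyCompactlyBounded.exists_subseq_tendsto (hF : LocallyCompactlyBounded F)
    {xs : ℕ → X} {x : X} {bs : ℕ → Y} (hx : Tendsto xs atTop (𝓝 x))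
    (hb : ∀ n, bs n ∈ clusterSet F (xs n)) :
    ∃ b ∈ clusterSet F x, ∃ φ : ℕ → ℕ, StrictMono φ ∧ Tendsto (bs ∘ φ) atTop (𝓝 b) := by
  obtain ⟨K, hK, hFK⟩ := hF x
  have hbK : ∀ᶠ n in atTop, bs n ∈ K := (hx.eventually hFK.eventually_nhds).mono fun n hn =>
    clusterSet_subset_of_preimage_mem_nhds hK.isClosed hn (hb n)
  obtain ⟨b, -, φ, hφ, hbφ⟩ := hK.tendsto_subseq' hbK.frequently
  refine ⟨b, ?_, φ, hφ, hbφ⟩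
  exact isClosed_setOf_mem_clusterSet.mem_of_tendsto
    ((hx.comp hφ.tendsto_atTop).prodMk_nhds hbφ) (Eventually.of_forall fun n => hb (φ n))

theorem LocallyCompactlyBounded.isClosed_setOf_exists_mem_clusterSet
    (hF : LocallyCompactlyBounded F) {D : Set Y} (hD : IsClosed D) :
    IsClosed {x | ∃ b ∈ D, b ∈ clusterSet F x} := by
  refine IsSeqClosed.isClosed fun xs x hxs hx => ?_
  choose bs hbD hbs using hxs
  obtain ⟨b, hb, φ, -, hbφ⟩ := hF.exists_subseq_tendsto hx hbs
  exact ⟨b, hD.mem_of_tendsto hbφ (Eventually.of_forall fun n => hbD (φ n)), hb⟩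

theorem LocallyCompactlyBounded.isCompact_setOf_exists_mem_clusterSet
    (hF : LocallyCompactlyBounded F) {S : Set X} (hS : IsCompact S) :
    IsCompact {b | ∃ x ∈ S, b ∈ clusterSet F x} := by
  refine IsSeqCompact.isCompact fun bs hbs => ?_
  choose xs hxS hbs using hbs
  obtain ⟨x, hx, ψ, hψ, hxψ⟩ := hS.tendsto_subseq hxS
  obtain ⟨b, hb, φ, hφ, hbφ⟩ := hF.exists_subseq_tendsto hxψ fun n => hbs (ψ n)
  exact ⟨b, ⟨x, hx, hb⟩, ψ ∘ φ, hψ.comp hφ, hbφ⟩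

theorem QuasiContinuous.mem_closure_interior_preimage (hF : QuasiContinuous F) {x : X} {b : Y}
    (hb : b ∈ clusterSet F x) {V : Set Y} (hV : IsOpen V) (hbV : b ∈ V) :
    x ∈ closure (interior (F ⁻¹' V)) := by
  rw [mem_closure_iff_nhds]
  intro U hU
  obtain ⟨u, hu, hFu⟩ := hb
  obtain ⟨n, hUn, hVn⟩ :=
    ((hu.eventually (interior_mem_nhds.2 hU)).and (hFu.eventually (hV.mem_nhds hbV))).exists
  obtain ⟨v, hv, hFv, hcont⟩ := hF (u n)
  obtain ⟨m, hUm, hVm⟩ :=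
    ((hv.eventually (isOpen_interior.mem_nhds hUn)).and (hFv.eventually (hV.mem_nhds hVn))).exists
  exact ⟨v m, interior_subset hUm,
    mem_interior_iff_mem_nhds.2 ((hcont m).preimage_mem_nhds (hV.mem_nhds hVm))⟩

end ClusterSet

theorem iInf₂_le_of_mem_closure {X α : Type*} [TopologicalSpace X] [CompleteLattice α]
    [TopologicalSpace α] [ClosedIciTopology α] {f : X → α} (hf : Continuous f) {s : Set X}
    {x : X} (hx : x ∈ closure s) : ⨅ y ∈ s, f y ≤ f x :=
  closure_minimal (t := f ⁻¹' Set.Ici (⨅ y ∈ s, f y)) (fun y hy => iInf₂_le y hy)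
    (isClosed_Ici.preimage hf) hx

theorem GoodRateFunction.exists_isMinOn {X : Type*} [TopologicalSpace X] {I : X → ℝ≥0∞}
    (hI : GoodRateFunction I) {C : Set X} (hC : IsClosed C) {x₀ : X} (hx₀ : x₀ ∈ C)
    (hfin : I x₀ ≠ ⊤) : ∃ x ∈ C, IsMinOn I C x := by
  set S := C ∩ {x | I x ≤ I x₀}
  have hS : IsCompact S := by
    have h := hI.2 (I x₀).toNNReal
    rw [ENNReal.coe_toNNReal hfin] at h
    exact h.inter_left hC
  obtain ⟨x, ⟨hxC, hxx₀⟩, hmin⟩ :=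
    LowerSemicontinuousOn.exists_isMinOn (s := S) ⟨x₀, hx₀, le_refl (I x₀)⟩ hS (hI.1.lowerSemicontinuousOn S)
  refine ⟨x, hxC, fun y hyC => ?_⟩
  rcases le_or_gt (I y) (I x₀) with hy | hy
  · exact hmin ⟨hyC, hy⟩
  · exact hxx₀.trans hy.le

section ClusterRate

variable {X Y : Type*} [MetricSpace X] [MetricSpace Y] {F : X → Y} {I : X → ℝ≥0∞}

theorem clusterRate_le_iff (hI : GoodRateFunction I) (b : Y) (c : ℝ≥0) :
    clusterRate F I b ≤ c ↔ ∃ x ∈ {x | I x ≤ c}, b ∈ clusterSet F x := by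
  constructor
  · intro hb
    obtain ⟨x₀, hx₀, hfin⟩ : ∃ x₀, b ∈ clusterSet F x₀ ∧ I x₀ < ⊤ := by
      simpa only [clusterRate, iInf_lt_iff, exists_prop] using
        hb.trans_lt ENNReal.coe_lt_top
    have hfiber : IsClosed {x | b ∈ clusterSet F x} :=
      isClosed_setOf_mem_clusterSet.preimage (continuous_id.prodMk continuous_const)
    obtain ⟨x, hx, hmin⟩ := hI.exists_isMinOn hfiber hx₀ hfin.ne
    exact ⟨x, (le_iInf₂ fun y hy => hmin hy).trans hb, hx⟩
  · rintro ⟨x, hx, hbx⟩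
    exact (iInf₂_le x hbx).trans hx

theorem LocallyCompactlyBounded.goodRateFunction_clusterRate (hF : LocallyCompactlyBounded F)
    (hI : GoodRateFunction I) : GoodRateFunction (clusterRate F I) := by
  have hcompact : ∀ c : ℝ≥0, IsCompact {b | clusterRate F I b ≤ c} := fun c => by
    simp only [clusterRate_le_iff hI]
    exact hF.isCompact_setOf_exists_mem_clusterSet (hI.2 c)
  refine ⟨lowerSemicontinuous_iff_isClosed_preimage.2 fun c => ?_, hcompact⟩
  rcases eq_or_ne c ⊤ with rfl | hc
  · simp only [Set.Iic_top, Set.preimage_univ, isClosed_univ]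
  · rw [← ENNReal.coe_toNNReal hc]
    exact (hcompact _).isClosed

end ClusterRate

theorem inv_mul_log_measure_mono {Ω : Type*} [MeasurableSpace Ω] (P : Measure Ω) (L : ℕ)
    {s t : Set Ω} (h : s ⊆ t) :
    (((L : ℝ)⁻¹ : ℝ) : EReal) * ENNReal.log (P s) ≤
      (((L : ℝ)⁻¹ : ℝ) : EReal) * ENNReal.log (P t) :=
  mul_le_mul_of_nonneg_left (ENNReal.log_monotone (measure_mono h))
    (EReal.coe_nonneg.2 (by positivity))

theorem SatisfiesLDP.comp_quasiContinuous {Ω X Y : Type*} [MeasurableSpace Ω] [MetricSpace X]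
    [MeasurableSpace X] [OpensMeasurableSpace X] [MetricSpace Y] [MeasurableSpace Y]
    {P : Measure Ω} {A : ℕ → Ω → X} {I : X → ℝ≥0∞} (hA : SatisfiesLDP P A I)
    (hIc : Continuous I) {F : X → Y} (hF : QuasiContinuous F) (hFb : LocallyCompactlyBounded F) :
    SatisfiesLDP P (fun L ω => F (A L ω)) (clusterRate F I) := by
  refine ⟨hFb.goodRateFunction_clusterRate hA.1, fun B _ => ⟨?_, ?_⟩⟩
  · set O := interior (F ⁻¹' interior B)
    have hinf : ⨅ x ∈ interior O, I x ≤ ⨅ b ∈ interior B, clusterRate F I b := by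
      rw [isOpen_interior.interior_eq]
      exact le_iInf₂ fun b hb => le_iInf₂ fun x hx =>
        iInf₂_le_of_mem_closure hIc (hF.mem_closure_interior_preimage hx isOpen_interior hb)
    calc _ ≤ -((⨅ x ∈ interior O, I x : ℝ≥0∞) : EReal) :=
          EReal.neg_le_neg_iff.2 (EReal.coe_ennreal_le_coe_ennreal_iff.2 hinf)
      _ ≤ _ := (hA.2 O isOpen_interior.measurableSet).1
      _ ≤ _ := liminf_le_liminf (Eventually.of_forall fun L => inv_mul_log_measure_mono P L
          (Set.preimage_mono (interior_subset.trans (Set.preimage_mono interior_subset))))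
  · set E := {x | ∃ b ∈ closure B, b ∈ clusterSet F x}
    have hE : IsClosed E := hFb.isClosed_setOf_exists_mem_clusterSet isClosed_closure
    have hinf : ⨅ b ∈ closure B, clusterRate F I b ≤ ⨅ x ∈ closure E, I x := by
      rw [hE.closure_eq]
      refine le_iInf₂ fun x hx => ?_
      obtain ⟨b, hbB, hbx⟩ := hx
      exact (iInf₂_le b hbB).trans (iInf₂_le x hbx)
    calc _ ≤ _ := limsup_le_limsup (Eventually.of_forall fun L => inv_mul_log_measure_mono P L
          (Set.preimage_mono fun x hx =>
            (⟨F x, subset_closure hx, self_mem_clusterSet F x⟩ : x ∈ E)))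
      _ ≤ -((⨅ x ∈ closure E, I x : ℝ≥0∞) : EReal) := (hA.2 E hE.measurableSet).2
      _ ≤ _ := EReal.neg_le_neg_iff.2 (EReal.coe_ennreal_le_coe_ennreal_iff.2 hinf)

section MaxWeight

variable {K : ℕ}

theorem posPart_sub_le {w r : Fin K → ℝ} (hw : 0 ≤ w) (hr : 0 ≤ r) :
    (_root_.posPart (w - r)).1 ≤ w := fun k =>
  max_le (sub_le_self _ (hr k)) (hw k)

theorem coe_le_sum_of_mem_GSetL {R : Set (Fin K → ℝ)} (hR : ∀ r ∈ R, 0 ≤ r) :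
    ∀ (l : List (Orth K)), ∀ z ∈ GSetL R l, z.1 ≤ (l.map Subtype.val).sum
  | [], z, hz => by
    rw [GSetL, Set.mem_singleton_iff] at hz
    subst hz
    exact fun _ => le_rfl
  | [a], z, hz => by
    rw [GSetL, Set.mem_singleton_iff] at hz
    simp [hz]
  | a :: b :: rest, z, hz => by
    obtain ⟨w, hw, r, hr, -, rfl⟩ := hz
    have hle := coe_le_sum_of_mem_GSetL hR (b :: rest) w hw
    rw [List.map_cons, List.sum_cons]
    exact fun k => add_le_add (le_refl (a.1 k))
      ((posPart_sub_le (fun k => w.2 k) (hR r hr) k).trans (hle k))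

theorem isCompact_setOf_coe_le (M : Fin K → ℝ) : IsCompact {b : Orth K | b.1 ≤ M} := by
  rw [Subtype.isCompact_iff]
  convert isCompact_Icc (a := (0 : Fin K → ℝ)) (b := M) using 1
  ext w
  exact ⟨fun ⟨b, hb, hbw⟩ => hbw ▸ ⟨fun k => b.2 k, hb⟩, fun hw => ⟨⟨w, hw.1⟩, hw.2, rfl⟩⟩

theorem locallyCompactlyBounded_of_le_sum {t : ℕ} {G : (Fin t → Orth K) → Orth K}
    (hG : ∀ a, (G a).1 ≤ ∑ i, (a i).1) : LocallyCompactlyBounded G := by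
  intro a
  set s : (Fin t → Orth K) → Fin K → ℝ := fun a => ∑ i, (a i).1
  have hs : Continuous s := continuous_finsetSum _ fun i _ =>
    continuous_subtype_val.comp (continuous_apply i)
  have hnear : ∀ᶠ a' in 𝓝 a, ∀ k ∈ Set.univ, s a' k ∈ Set.Iio (s a k + 1) :=
    hs.continuousAt (set_pi_mem_nhds Set.finite_univ fun k _ => Iio_mem_nhds (lt_add_one _))
  exact ⟨_, isCompact_setOf_coe_le (s a + 1), hnear.mono fun a' ha' k =>
    (hG a' k).trans (ha' k trivial).le⟩

end MaxWeight

theorem finite_horizon_LDP_maxweight_general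
    (K : ℕ) (R : Set (Fin K → ℝ))
    (hRpos : ∀ r ∈ R, ∀ k, 0 ≤ r k)
    (t : ℕ)
    (G : (Fin t → Orth K) → Orth K)
    (hGqc : QuasiContinuous G) (hGsel : ∀ a : Fin t → Orth K, G a ∈ GSetL R (List.ofFn a))
    {Ω : Type*} [MeasurableSpace Ω] (P : Measure Ω)
    (A : ℕ → Ω → (Fin t → Orth K))
    (Isharp : (Fin t → Orth K) → ℝ≥0∞)
    (hldp : SatisfiesLDP P A Isharp) (hIc : Continuous Isharp) :
    SatisfiesLDP P (fun L ω => G (A L ω))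
      (fun b : Orth K => ⨅ (x : Fin t → Orth K) (_ : b ∈ clusterSet G x), Isharp x) := by
  have hGsum : ∀ a, (G a).1 ≤ ∑ i, (a i).1 := fun a => by
    simpa only [List.map_ofFn, List.sum_ofFn, Function.comp_apply] using
      coe_le_sum_of_mem_GSetL hRpos (List.ofFn a) (G a) (hGsel a)
  exact hldp.comp_quasiContinuous hIc hGqc (locallyCompactlyBounded_of_le_sum hGsum)

/-- Finite-horizon LDP under max-weight scheduling: if the arrivals
satisfy an LDP with a continuous good rate function `I_t^♯`, then the workloads
`G_t(A^L)` satisfy an LDP with good rate function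
`I_t(b) = inf {I_t^♯(x) : b ∈ ^xG_t}`. -/
theorem finite_horizon_LDP_maxweight
    (K : ℕ) (hK : 1 ≤ K) (R : Set (Fin K → ℝ))
    (hRne : R.Nonempty) (hRcomp : IsCompact R) (hRconv : Convex ℝ R)
    (hRpos : ∀ r ∈ R, ∀ k, 0 ≤ r k)
    (hRcc : ∀ r ∈ R, ∀ r' : Fin K → ℝ, (∀ k, 0 ≤ r' k) → (∀ k, r' k ≤ r k) → r' ∈ R)
    (t : ℕ) (ht : 1 ≤ t)
    (G : (Fin t → Orth K) → Orth K) (hGmeas : Measurable G)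
    (hGqc : QuasiContinuous G) (hGsel : ∀ a : Fin t → Orth K, G a ∈ GSetL R (List.ofFn a))
    {Ω : Type*} [MeasurableSpace Ω] (P : Measure Ω) [IsProbabilityMeasure P]
    (A : ℕ → Ω → (Fin t → Orth K)) (hA : ∀ L, Measurable (A L))
    (Isharp : (Fin t → Orth K) → ℝ≥0∞)
    (hldp : SatisfiesLDP P A Isharp) (hIc : Continuous Isharp) :
    SatisfiesLDP P (fun L ω => G (A L ω))
      (fun b : Orth K => ⨅ (x : Fin t → Orth K) (_ : b ∈ clusterSet G x), Isharp x) :=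
  finite_horizon_LDP_maxweight_general K R hRpos t G hGqc hGsel P A Isharp hldp hIc
end

section
/- Let K ≥ 1, C^1,…,C^K > 0 and ℛ_s be the simplex rate region; let μ ∈ ℝ₊^K with μ̂ := Σ_k μ^k/C^k < 1, and a ∈ 𝒟^K_μ. Write â_s := Σ_k a^k_s/C^k and â(m, m+t] := Σ_{s=m+1}^{m+t} â_s. Then there exists s* ∈ ℕ such that sup_{t≥1} (â(s*, s*+t] − (t−1)) ≤ 1 (i.e., under the work-conserving max-weight policy the infinite-horizon workload at time −s* lies in ℛ_s); moreover, for every sequence (aⁿ) in 𝒟^K_μ converging to a in the scaled uniform metric there exists n₀ such that sup_{t≥1} (âⁿ(s*, s*+t] − (t−1)) ≤ 1 for all n ≥ n₀. -/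
open Filter Topology MeasureTheory
open scoped ENNReal NNReal

/-- The space 𝒟^K of nonnegative arrival sequences with bounded scaled partial sums;
`f s k` is the work brought into queue `k` at time `-(s+1)` (i.e. the paper's `a^k_{s+1}`). -/
structure DK (K : ℕ) where
  f : ℕ → Fin K → ℝ
  nonneg : ∀ s k, 0 ≤ f s k
  bdd : ∀ k, BddAbove (Set.range fun t : ℕ => (∑ s ∈ Finset.range (t + 1), f s k) / (t + 1))

namespace DK

/-- Embedding of `DK K` into bounded functions via the scaled partial sums
`(t, k) ↦ a^k(0, t+1] / (t+1)`; the induced metric is the scaled uniform metric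
`d(x,y) = sup_{t≥1} max_k |x^k(0,t] − y^k(0,t]| / t`. -/
noncomputable def emb {K : ℕ} (a : DK K) : BoundedContinuousFunction (ℕ × Fin K) ℝ :=
  ⟨⟨fun p => (∑ s ∈ Finset.range (p.1 + 1), a.f s p.2) / (p.1 + 1),
    continuous_of_discreteTopology⟩, by
    classical
    choose M hM using fun k => (a.bdd k).imp (fun M hM => fun t =>
      hM (Set.mem_range_self t))
    refine ⟨∑ k : Fin K, |M k|, fun x y => ?_⟩
    have hb : ∀ p : ℕ × Fin K,
        (∑ s ∈ Finset.range (p.1 + 1), a.f s p.2) / (p.1 + 1) ∈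
          Set.Icc (0 : ℝ) (∑ k : Fin K, |M k|) := by
      intro p
      constructor
      · exact div_nonneg (Finset.sum_nonneg fun s _ => a.nonneg s p.2) (by positivity)
      · refine le_trans (hM p.2 p.1) (le_trans (le_abs_self _) ?_)
        exact Finset.single_le_sum (f := fun k => |M k|) (fun k _ => abs_nonneg _)
          (Finset.mem_univ p.2)
    have hx := hb x; have hy := hb y
    rw [Real.dist_eq, abs_sub_le_iff]
    constructor <;> linarith [hx.1, hx.2, hy.1, hy.2]⟩

theorem emb_injective {K : ℕ} : Function.Injective (emb (K := K)) := by
  intro a b h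
  have hval : ∀ t : ℕ, ∀ k, (∑ s ∈ Finset.range (t + 1), a.f s k) / (t + 1)
      = (∑ s ∈ Finset.range (t + 1), b.f s k) / (t + 1) := by
    intro t k
    exact congrArg (fun F : BoundedContinuousFunction (ℕ × Fin K) ℝ => F (t, k)) h
  have hsum : ∀ t : ℕ, ∀ k, (∑ s ∈ Finset.range t, a.f s k) = ∑ s ∈ Finset.range t, b.f s k := by
    intro t k
    cases t with
    | zero => simp
    | succ t =>
      have := hval t k
      have ht : ((t : ℝ) + 1) ≠ 0 := by positivity
      field_simp at this
      exact this
  have hf : a.f = b.f := by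
    funext s k
    have h1 := hsum (s + 1) k
    have h2 := hsum s k
    rw [Finset.sum_range_succ, Finset.sum_range_succ] at h1
    linarith
  cases a; cases b; simp_all

/-- The scaled uniform metric on 𝒟^K. -/
noncomputable instance {K : ℕ} : MetricSpace (DK K) :=
  MetricSpace.induced emb emb_injective inferInstance

end DK

/-- 𝒟^K_μ : arrival processes with long-run rate `μ`, as a metric subspace of 𝒟^K. -/
abbrev Dmu (K : ℕ) (μ : Fin K → ℝ) :=
  {a : DK K // ∀ k,
    Tendsto (fun t : ℕ => (∑ s ∈ Finset.range t, a.f s k) / t) atTop (nhds (μ k))}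

/-!
The cumulative workload `Â(n) = Σ_{s<n} â_s` grows at rate `μ̂ < 1`, so for `μ̂ < c < 1` the
sequence `Â(n) - c n` tends to `-∞` and attains its maximum at some `s*`. From `s*` on, every
window satisfies `â(s*, s*+t+1] ≤ c (t+1)`, which leaves a slack `(1 - c)(t+1)` growing linearly
in `t`. A perturbation at scaled uniform distance `d` moves `Â(m)` by at most `d m Σ_k |1/C^k|`,
hence moves the window sum by `O(d (s* + t + 1))`, which the slack absorbs once `d` is small.
-/

lemma exists_forall_sub_mul_le_of_tendsto_div {u : ℕ → ℝ} {L c : ℝ}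
    (hu : Tendsto (fun n : ℕ => u n / n) atTop (𝓝 L)) (hLc : L < c) :
    ∃ s : ℕ, ∀ n : ℕ, u n - c * n ≤ u s - c * s := by
  have hbot : Tendsto (fun n : ℕ => (n : ℝ) * (u n / n - c)) atTop atBot :=
    tendsto_natCast_atTop_atTop.atTop_mul_neg (sub_neg.mpr hLc) (hu.sub_const c)
  have heq : (fun n : ℕ => (n : ℝ) * (u n / n - c)) =ᶠ[atTop] fun n => u n - c * n := by
    filter_upwards [eventually_ne_atTop 0] with n hn
    field_simp
  rw [← Nat.cofinite_eq_atTop] at heq hbot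
  exact (hbot.congr' heq).exists_forall_ge

/-- The paper's `â_{s+1} = Σ_k a^k_{s+1} / C^k`, indexed like `DK.f`. -/
noncomputable def DK.work {K : ℕ} (C : Fin K → ℝ) (x : DK K) (s : ℕ) : ℝ := ∑ k, x.f s k / C k

lemma DK.abs_sum_range_sub_le {K : ℕ} (x y : DK K) (m : ℕ) (k : Fin K) :
    |∑ s ∈ Finset.range m, x.f s k - ∑ s ∈ Finset.range m, y.f s k| ≤ dist x y * m := by
  cases m with
  | zero => simp
  | succ m =>
    have hm : (0 : ℝ) < m + 1 := by positivity
    have h := BoundedContinuousFunction.dist_coe_le_dist (f := DK.emb x) (g := DK.emb y) (m, k)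
    change |_ / _ - _ / _| ≤ dist x y at h
    rw [← sub_div, abs_div, abs_of_pos hm, div_le_iff₀ hm] at h
    exact_mod_cast h

lemma DK.sum_range_work {K : ℕ} (C : Fin K → ℝ) (x : DK K) (n : ℕ) :
    ∑ s ∈ Finset.range n, x.work C s = ∑ k, (∑ s ∈ Finset.range n, x.f s k) / C k := by
  simp only [DK.work, Finset.sum_div]
  exact Finset.sum_comm

lemma DK.abs_sum_range_work_sub_le {K : ℕ} (C : Fin K → ℝ) (x y : DK K) (m : ℕ) :
    |∑ s ∈ Finset.range m, x.work C s - ∑ s ∈ Finset.range m, y.work C s|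
      ≤ dist x y * m * ∑ k, |(C k)⁻¹| := by
  rw [DK.sum_range_work, DK.sum_range_work, ← Finset.sum_sub_distrib, Finset.mul_sum]
  refine (Finset.abs_sum_le_sum_abs _ _).trans (Finset.sum_le_sum fun k _ => ?_)
  rw [← sub_div, div_eq_mul_inv, abs_mul]
  exact mul_le_mul_of_nonneg_right (DK.abs_sum_range_sub_le x y m k) (abs_nonneg _)

lemma DK.abs_sum_Ico_work_sub_le {K : ℕ} (C : Fin K → ℝ) (x y : DK K) {m n : ℕ}
    (hmn : m ≤ n) :
    |∑ s ∈ Finset.Ico m n, x.work C s - ∑ s ∈ Finset.Ico m n, y.work C s|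
      ≤ dist x y * (m + n) * ∑ k, |(C k)⁻¹| := by
  rw [Finset.sum_Ico_eq_sub _ hmn, Finset.sum_Ico_eq_sub _ hmn]
  have hn := DK.abs_sum_range_work_sub_le C x y n
  have hm := DK.abs_sum_range_work_sub_le C x y m
  calc _ = |(∑ s ∈ Finset.range n, x.work C s - ∑ s ∈ Finset.range n, y.work C s)
          - (∑ s ∈ Finset.range m, x.work C s - ∑ s ∈ Finset.range m, y.work C s)| := by
        ring_nf
    _ ≤ _ := (abs_sub _ _).trans (by linarith)

lemma Dmu.tendsto_sum_range_work_div {K : ℕ} {μ : Fin K → ℝ} (C : Fin K → ℝ) (a : Dmu K μ) :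
    Tendsto (fun n : ℕ => (∑ s ∈ Finset.range n, a.1.work C s) / n) atTop
      (𝓝 (∑ k, μ k / C k)) := by
  have h : ∀ n : ℕ, (∑ s ∈ Finset.range n, a.1.work C s) / n
      = ∑ k, (∑ s ∈ Finset.range n, a.1.f s k) / n / C k := fun n => by
    rw [DK.sum_range_work, Finset.sum_div]
    exact Finset.sum_congr rfl fun k _ => div_right_comm _ _ _
  simp only [h]
  exact tendsto_finsetSum _ fun k _ => (a.2 k).div_const (C k)

lemma DK.sum_Ico_work_sub_le_one {K : ℕ} {C : Fin K → ℝ} {x y : DK K} {s : ℕ} {c : ℝ}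
    (hy : ∀ t : ℕ, ∑ i ∈ Finset.Ico s (s + t + 1), y.work C i ≤ c * (t + 1))
    (hxy : (∑ k, |(C k)⁻¹|) * (2 * s + 1) * dist x y ≤ 1 - c) (t : ℕ) :
    ∑ i ∈ Finset.Ico s (s + t + 1), x.work C i - t ≤ 1 := by
  have hpert := (abs_le.mp (DK.abs_sum_Ico_work_sub_le C x y
    (show s ≤ s + t + 1 by omega))).2
  have hS : 0 ≤ ∑ k, |(C k)⁻¹| := Finset.sum_nonneg fun k _ => abs_nonneg _
  have hlen : (s : ℝ) + ↑(s + t + 1) ≤ (2 * s + 1) * (t + 1) := by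
    push_cast
    nlinarith [(Nat.cast_nonneg t : (0 : ℝ) ≤ t), (Nat.cast_nonneg s : (0 : ℝ) ≤ s)]
  have hslack : dist x y * (s + ↑(s + t + 1)) * ∑ k, |(C k)⁻¹| ≤ (1 - c) * (t + 1) :=
    calc _ ≤ dist x y * ((2 * s + 1) * (t + 1)) * ∑ k, |(C k)⁻¹| := by gcongr
      _ = (∑ k, |(C k)⁻¹|) * (2 * s + 1) * dist x y * (t + 1) := by ring
      _ ≤ (1 - c) * (t + 1) := by gcongr
  linarith [hy t]

theorem stationary_workload_in_region_at_finite_time_general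
    (K : ℕ) (C : Fin K → ℝ)
    (μ : Fin K → ℝ) (hμ : ∑ k, μ k / C k < 1)
    (a : Dmu K μ) :
    ∃ sstar : ℕ,
      (∀ t : ℕ,
        (∑ s ∈ Finset.Ico sstar (sstar + t + 1), ∑ k, a.1.f s k / C k) - t ≤ 1) ∧
      ∀ aN : ℕ → Dmu K μ, Tendsto aN atTop (nhds a) →
        ∃ n₀ : ℕ, ∀ n, n₀ ≤ n → ∀ t : ℕ,
          (∑ s ∈ Finset.Ico sstar (sstar + t + 1), ∑ k, (aN n).1.f s k / C k) - t ≤ 1 := by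
  obtain ⟨c, hμc, hc1⟩ := exists_between hμ
  obtain ⟨sstar, hmax⟩ := exists_forall_sub_mul_le_of_tendsto_div
    (Dmu.tendsto_sum_range_work_div C a) hμc
  have hwindow : ∀ t : ℕ, ∑ s ∈ Finset.Ico sstar (sstar + t + 1), a.1.work C s ≤ c * (t + 1) := by
    intro t
    rw [Finset.sum_Ico_eq_sub _ (by omega)]
    have := hmax (sstar + t + 1)
    push_cast at this
    linarith
  refine ⟨sstar, DK.sum_Ico_work_sub_le_one hwindow (by simpa using hc1.le), fun aN haN => ?_⟩
  obtain ⟨δ, hδ, hδc⟩ :=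
    exists_pos_mul_lt (sub_pos.mpr hc1) ((∑ k, |(C k)⁻¹|) * (2 * sstar + 1))
  obtain ⟨n₀, hn₀⟩ := Metric.tendsto_atTop.mp haN δ hδ
  refine ⟨n₀, fun n hn => DK.sum_Ico_work_sub_le_one hwindow ?_⟩
  calc _ ≤ (∑ k, |(C k)⁻¹|) * (2 * sstar + 1) * δ := by gcongr; exact (hn₀ n hn).le
    _ ≤ 1 - c := hδc.le

/-- For `μ` strictly inside the simplex rate region and `a ∈ 𝒟^K_μ`,
there is a finite `s*` with `sup_{t≥1} (â(s*, s*+t] − (t−1)) ≤ 1` (the stationary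
workload at time `−s*` lies in `ℛ_s`), and the same bound holds eventually along any
sequence `aⁿ → a` in the scaled uniform metric. -/
theorem stationary_workload_in_region_at_finite_time
    (K : ℕ) (hK : 1 ≤ K) (C : Fin K → ℝ) (hC : ∀ k, 0 < C k)
    (μ : Fin K → ℝ) (hμ0 : ∀ k, 0 ≤ μ k) (hμ : ∑ k, μ k / C k < 1)
    (a : Dmu K μ) :
    ∃ sstar : ℕ,
      (∀ t : ℕ,
        (∑ s ∈ Finset.Ico sstar (sstar + t + 1), ∑ k, a.1.f s k / C k) - t ≤ 1) ∧
      ∀ aN : ℕ → Dmu K μ, Tendsto aN atTop (nhds a) →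
        ∃ n₀ : ℕ, ∀ n, n₀ ≤ n → ∀ t : ℕ,
          (∑ s ∈ Finset.Ico sstar (sstar + t + 1), ∑ k, (aN n).1.f s k / C k) - t ≤ 1 :=
  stationary_workload_in_region_at_finite_time_general K C μ hμ a
end
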